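/- arXiv:2306.06445 — 15 statements merged into one kernel-verified Lean document; each statement's English description precedes it below -/
import Mathlib

section
/- Let R be a (associative, unital, nonzero) centrally essential ring such that the factor ring R/J(R) is commutative. Then every minimal right ideal S of R is contained in the center C(R). In particular, every minimal right ideal of R is a two-sided ideal, and the right socle Soc(R_R) is contained in C(R). -/
/-- A ring `R` is *centrally essential* if for every nonzero `a ∈ R` there is a central
element `c` such that `a * c` is a nonzero central element. -/
def IsCentrallyEssential (R : Type*) [Ring R] : Prop :=
  ∀ a : R, a ≠ 0 → ∃ c ∈ Set.center R, a * c ≠ 0 ∧ a * c ∈ Set.center R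

lemma aux_jacobson_right_mul {R : Type*} [Ring R] {j : R}
    (hj : j ∈ Ideal.jacobson (⊥ : Ideal R)) (u : R) :
    j * u ∈ Ideal.jacobson (⊥ : Ideal R) :=
  (Ideal.jacobson (⊥ : Ideal R)).mul_mem_right u hj

/-- If `R` is a centrally essential ring such that `R/J(R)` is commutative, then every
minimal right ideal of `R` is contained in the center; in particular every minimal right
ideal is a two-sided ideal, and the right socle is contained in the center. -/
theorem centrallyEssential_minimal_right_ideal_central
    (R : Type*) [Ring R] [Nontrivial R]
    (hce : IsCentrallyEssential R)
    (hcomm : ∀ a b : R, a * b - b * a ∈ Ideal.jacobson (⊥ : Ideal R)) :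
    (∀ S : Submodule Rᵐᵒᵖ R, IsAtom S → (S : Set R) ⊆ Set.center R) ∧
    (∀ S : Submodule Rᵐᵒᵖ R, IsAtom S → ∀ r : R, ∀ s ∈ S, r * s ∈ S) ∧
    (∀ x : R, x ∈ (⨆ S ∈ {S : Submodule Rᵐᵒᵖ R | IsAtom S}, S) → x ∈ Set.center R) := by
  have main : ∀ S : Submodule Rᵐᵒᵖ R, IsAtom S → (S : Set R) ⊆ Set.center R := by
    intro S hS
    -- find a nonzero element of S
    obtain ⟨s, hsS, hs0⟩ : ∃ s ∈ S, s ≠ 0 := by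
      by_contra h
      push_neg at h
      exact hS.1 (by
        ext x
        simp only [Submodule.mem_bot]
        exact ⟨fun hx => h x hx, fun hx => by simp [hx]⟩)
    obtain ⟨c, hc, hz0, hz⟩ := hce s hs0
    set z := s * c with hzdef
    have hzS : z ∈ S := by
      have := S.smul_mem (MulOpposite.op c) hsS
      rwa [MulOpposite.smul_eq_mul_unop, MulOpposite.unop_op] at this
    -- z * J = 0
    have hzJ : ∀ j ∈ Ideal.jacobson (⊥ : Ideal R), z * j = 0 := by
      intro j hj
      let K : Submodule Rᵐᵒᵖ R :=
        { carrier := {x | ∃ j ∈ Ideal.jacobson (⊥ : Ideal R), x = z * j}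
          add_mem' := by
            rintro x y ⟨j1, hj1, rfl⟩ ⟨j2, hj2, rfl⟩
            exact ⟨j1 + j2, add_mem hj1 hj2, (mul_add z j1 j2).symm⟩
          zero_mem' := ⟨0, zero_mem _, (mul_zero z).symm⟩
          smul_mem' := by
            rintro r x ⟨j1, hj1, rfl⟩
            refine ⟨j1 * r.unop, aux_jacobson_right_mul hj1 _, ?_⟩
            rw [MulOpposite.smul_eq_mul_unop, mul_assoc] }
      have hKS : K ≤ S := by
        rintro x ⟨j1, hj1, rfl⟩
        have := S.smul_mem (MulOpposite.op j1) hzS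
        rwa [MulOpposite.smul_eq_mul_unop, MulOpposite.unop_op] at this
      have hKbot : K = ⊥ := by
        rcases (hS.le_iff.mp hKS) with h | h
        · exact h
        · exfalso
          have hzK : z ∈ K := h ▸ hzS
          obtain ⟨j1, hj1, hz1⟩ := hzK
          -- 1 - j1 has a left inverse s₀
          obtain ⟨s₀, hs₀⟩ := Ideal.exists_mul_sub_mem_of_sub_one_mem_jacobson (1 - j1)
            (by simpa using (Ideal.jacobson (⊥ : Ideal R)).neg_mem hj1)
          rw [Ideal.mem_bot, sub_eq_zero] at hs₀
          -- (1 - j1) * z = z * (1 - j1) = z - z * j1 = 0 since z is central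
          have h1 : (1 - j1) * z = 0 := by
            rw [Semigroup.mem_center_iff.mp hz (1 - j1), mul_sub, mul_one, ← hz1, sub_self]
          apply hz0
          calc z = (s₀ * (1 - j1)) * z := by rw [hs₀, one_mul]
          _ = s₀ * ((1 - j1) * z) := mul_assoc _ _ _
          _ = 0 := by rw [h1, mul_zero]
      have hmem : z * j ∈ K := ⟨j, hj, rfl⟩
      rw [hKbot] at hmem
      simpa using hmem
    -- S = span {z}
    have hspan : Submodule.span Rᵐᵒᵖ {z} = S := by
      rcases hS.le_iff.mp ((Submodule.span_singleton_le_iff_mem z S).mpr hzS) with h | h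
      · exfalso
        have hzmem : z ∈ Submodule.span Rᵐᵒᵖ ({z} : Set R) := Submodule.mem_span_singleton_self z
        rw [h] at hzmem
        exact hz0 (by simpa using hzmem)
      · exact h
    -- every element of S is central
    intro x hxS
    rw [← hspan, SetLike.mem_coe] at hxS
    obtain ⟨r, rfl⟩ := Submodule.mem_span_singleton.mp hxS
    rw [MulOpposite.smul_eq_mul_unop]
    set u := r.unop
    rw [Semigroup.mem_center_iff]
    intro t
    have h1 : t * (z * u) = z * (t * u) := by
      rw [← mul_assoc, Semigroup.mem_center_iff.mp hz t, mul_assoc]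
    have h2 : z * (u * t) - z * (t * u) = 0 := by
      rw [← mul_sub]
      exact hzJ _ (hcomm u t)
    calc t * (z * u) = z * (t * u) := h1
    _ = z * (u * t) := (sub_eq_zero.mp h2).symm
    _ = z * u * t := (mul_assoc _ _ _).symm
  refine ⟨main, fun S hS r s hs => ?_, fun x hx => ?_⟩
  · have hcen := Semigroup.mem_center_iff.mp (main S hS hs) r
    rw [hcen]
    have := S.smul_mem (MulOpposite.op r) hs
    rwa [MulOpposite.smul_eq_mul_unop, MulOpposite.unop_op] at this
  · rw [iSup_subtype'] at hx
    exact Submodule.iSup_induction (motive := (· ∈ Set.center R)) _ hx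
      (fun i y hy => main i.1 i.2 hy) Set.zero_mem_center
      (fun a b ha hb => Set.add_mem_center ha hb)
end

section
/- If R is a right Noetherian, subdirectly indecomposable, centrally essential ring, then R is a local ring which is both right and left Artinian. -/
/-- A ring is *subdirectly indecomposable* if the intersection of all its nonzero
two-sided ideals is nonzero. -/
def IsSubdirectlyIndecomposable (R : Type*) [Ring R] : Prop :=
  sInf {I : TwoSidedIdeal R | I ≠ ⊥} ≠ ⊥

set_option linter.unusedSectionVars false

namespace CEaux
open MulOpposite Submodule

variable {R : Type*} [Ring R]

/-- right annihilator of an element, as a right submodule -/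
def rann (a : R) : Submodule Rᵐᵒᵖ R where
  carrier := {y | a * y = 0}
  add_mem' := by
    intro y z hy hz
    simp only [Set.mem_setOf_eq, mul_add] at *
    rw [hy, hz, add_zero]
  zero_mem' := by simp
  smul_mem' := by
    intro c y hy
    simp only [Set.mem_setOf_eq, MulOpposite.smul_eq_mul_unop] at *
    rw [← mul_assoc, hy, zero_mul]

lemma mem_rann {a y : R} : y ∈ rann a ↔ a * y = 0 := Iff.rfl

variable {e : R}

lemma pow_mul_e {x : R} (hx : x * e = 0) : ∀ n : ℕ, x ^ (n + 1) * e = 0 := by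
  intro n
  rw [pow_succ, mul_assoc, hx, mul_zero]

/-- Every element annihilating `e` (on the right) is nilpotent. -/
lemma lem_nil [IsNoetherian Rᵐᵒᵖ R] (he0 : e ≠ 0)
    (hA0 : ∀ a : R, a ≠ 0 → ∃ s, e = a * s)
    {x : R} (hx : x * e = 0) : IsNilpotent x := by
  by_contra hnil
  have hxn : ∀ n : ℕ, x ^ n ≠ 0 := fun n h => hnil ⟨n, h⟩
  have mono : Monotone (fun k : ℕ => rann (x ^ (k + 1))) := by
    apply monotone_nat_of_le_succ
    intro k y hy
    rw [mem_rann] at *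
    rw [pow_succ', mul_assoc, hy, mul_zero]
  obtain ⟨n, hn⟩ := monotone_stabilizes_iff_noetherian.mpr inferInstance ⟨_, mono⟩
  obtain ⟨s, hs⟩ := hA0 (x ^ (n + 1)) (hxn (n + 1))
  have hs2 : s ∈ rann (x ^ ((2 * n + 1) + 1)) := by
    rw [mem_rann]
    have : (2 * n + 1) + 1 = (n + 1) + (n + 1) := by ring
    rw [this, pow_add, mul_assoc, ← hs, pow_mul_e hx]
  have heq : rann (x ^ (n + 1)) = rann (x ^ (2 * n + 1 + 1)) := hn (2 * n + 1) (by omega)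
  have : s ∈ rann (x ^ (n + 1)) := by rw [heq]; exact hs2
  rw [mem_rann, ← hs] at this
  exact he0 this

section
variable (hcomm : ∀ g : R, g * e = e * g)
variable (hce : IsCentrallyEssential R)
variable (hA0' : ∀ a : R, a ≠ 0 → ∃ s, e = s * a)

include hcomm hce hA0'

/-- Elements not annihilating `e` are left regular. -/
lemma lem_regl {x : R} (hx : x * e ≠ 0) {y : R} (hxy : x * y = 0) : y = 0 := by
  by_contra hy
  obtain ⟨c, hcC, hyc0, hycC⟩ := hce y hy
  have hxd : x * (y * c) = 0 := by rw [← mul_assoc, hxy, zero_mul]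
  obtain ⟨t, ht⟩ := hA0' (y * c) hyc0
  apply hx
  have hdx : (y * c) * x = x * (y * c) := (Semigroup.mem_center_iff.mp hycC x).symm
  rw [hcomm x, ht, mul_assoc, hdx, hxd, mul_zero]

/-- Elements not annihilating `e` are right regular. -/
lemma lem_regr {x : R} (hx : x * e ≠ 0) {y : R} (hxy : y * x = 0) : y = 0 := by
  by_contra hy
  obtain ⟨c, hcC, hyc0, hycC⟩ := hce y hy
  have hxd : (y * c) * x = 0 := by
    have : x * c = c * x := Semigroup.mem_center_iff.mp hcC x
    rw [mul_assoc, ← this, ← mul_assoc, hxy, zero_mul]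
  obtain ⟨t, ht⟩ := hA0' (y * c) hyc0
  apply hx
  rw [hcomm x, ht, mul_assoc, hxd, mul_zero]

end

section
variable [IsNoetherian Rᵐᵒᵖ R] (he0 : e ≠ 0)
  (hcomm : ∀ g : R, g * e = e * g)
  (hce : IsCentrallyEssential R)
  (hA0 : ∀ a : R, a ≠ 0 → ∃ s, e = a * s)
  (hA0' : ∀ a : R, a ≠ 0 → ∃ s, e = s * a)

include he0 hcomm hce hA0 hA0'

/-- Elements not annihilating `e` are units. -/
lemma lem_unit {x : R} (hx : x * e ≠ 0) : IsUnit x := by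
  obtain ⟨s, hs⟩ := hA0 (x * e) hx
  have hxse : (x * s) * e = e := by
    rw [mul_assoc, hcomm s, ← mul_assoc, ← hs]
  have hj : (1 - x * s) * e = 0 := by rw [sub_mul, one_mul, hxse, sub_self]
  have hnil : IsNilpotent (1 - x * s) := lem_nil he0 hA0 hj
  have hu : IsUnit (x * s) := by
    have := hnil.isUnit_one_sub
    simpa using this
  obtain ⟨u, hu⟩ := hu
  have hxv : x * (s * ↑u⁻¹) = 1 := by
    rw [← mul_assoc, ← hu, u.mul_inv]
  have hvx : (s * ↑u⁻¹) * x = 1 := by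
    have h0 : x * ((s * ↑u⁻¹) * x - 1) = 0 := by
      rw [mul_sub, ← mul_assoc, hxv, one_mul, mul_one, sub_self]
    have := lem_regl hcomm hce hA0' hx h0
    rwa [sub_eq_zero] at this
  exact ⟨⟨x, s * ↑u⁻¹, hxv, hvx⟩, rfl⟩

end

lemma lem_nonunit (he0 : e ≠ 0) {x : R} (hx : x * e = 0) : ¬IsUnit x := by
  rintro ⟨u, rfl⟩
  apply he0
  calc e = ↑u⁻¹ * (↑u * e) := by rw [← mul_assoc, u.inv_mul, one_mul]
  _ = 0 := by rw [hx, mul_zero]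

section
variable (hcomm : ∀ g : R, g * e = e * g)
  (hce : IsCentrallyEssential R)
  (hA0' : ∀ a : R, a ≠ 0 → ∃ s, e = s * a)

include hcomm hce hA0'

/-- Every element killing (on the right) all right annihilators of `e` is central. -/
lemma lem_central {z : R} (hz : ∀ p : R, p * e = 0 → z * p = 0) :
    ∀ g : R, g * z = z * g := by
  rcases eq_or_ne z 0 with rfl | hz0
  · simp
  intro g
  obtain ⟨c, hcC, hzc0, hzcC⟩ := hce z hz0
  have hce' : c * e ≠ 0 := by
    intro h
    exact hzc0 (hz c h)
  have hdc : (g * z - z * g) * c = 0 := by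
    have h1 : g * (z * c) = (z * c) * g := Semigroup.mem_center_iff.mp hzcC g
    have h2 : g * c = c * g := Semigroup.mem_center_iff.mp hcC g
    rw [sub_mul, mul_assoc, h1, mul_assoc z g c, h2, ← mul_assoc, sub_self]
  have := lem_regr hcomm hce hA0' hce' hdc
  rwa [sub_eq_zero] at this

end

section levitzki
variable [IsNoetherian Rᵐᵒᵖ R]

/-- relative right annihilator modulo a right submodule -/
def rannM (M : Submodule Rᵐᵒᵖ R) (b : R) : Submodule Rᵐᵒᵖ R where
  carrier := {y | b * y ∈ M}
  add_mem' := by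
    intro y z hy hz
    simp only [Set.mem_setOf_eq, mul_add] at *
    exact M.add_mem hy hz
  zero_mem' := by simp
  smul_mem' := by
    intro c y hy
    simp only [Set.mem_setOf_eq, MulOpposite.smul_eq_mul_unop] at *
    rw [← mul_assoc]
    exact M.smul_mem c hy

lemma mem_rannM {M : Submodule Rᵐᵒᵖ R} {b y : R} : y ∈ rannM M b ↔ b * y ∈ M := Iff.rfl

lemma pair_up {P Q : R → Prop} (hmul : ∀ x y, P x → P y → Q (x * y)) :
    ∀ (j : ℕ) (l : List R), (∀ x ∈ l, P x) → l.length = 2 * j →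
      ∃ l' : List R, (∀ x ∈ l', Q x) ∧ l'.length = j ∧ l'.prod = l.prod := by
  intro j
  induction j with
  | zero =>
    intro l _ hl
    rw [Nat.mul_zero, List.length_eq_zero_iff] at hl
    subst hl
    exact ⟨[], by simp, rfl, rfl⟩
  | succ j ih =>
    intro l hl hlen
    rcases l with _ | ⟨x, _ | ⟨y, t⟩⟩
    · simp at hlen
    · simp at hlen; omega
    · have hx := hl x (by simp)
      have hy := hl y (by simp)
      have ht : ∀ z ∈ t, P z := fun z hz => hl z (by simp [hz])
      have htl : t.length = 2 * j := by simp at hlen; omega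
      obtain ⟨l', h1, h2, h3⟩ := ih t ht htl
      refine ⟨(x * y) :: l', ?_, by simp [h2], by simp [List.prod_cons, h3, mul_assoc]⟩
      intro z hz
      rcases List.mem_cons.mp hz with rfl | hz
      · exact hmul x y hx hy
      · exact h1 z hz

variable (he0 : e ≠ 0) (hA0 : ∀ a : R, a ≠ 0 → ∃ s, e = a * s)
include he0 hA0

lemma lem_levitzki :
    ∃ N : ℕ, ∀ l : List R, (∀ x ∈ l, x * e = 0) → l.length = N → l.prod = 0 := by
  classical
  have hbot : (⊥ : Submodule Rᵐᵒᵖ R) ∈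
      {M : Submodule Rᵐᵒᵖ R | (∀ r x : R, x ∈ M → r * x ∈ M) ∧
        ∃ s : ℕ, ∀ l : List R, (∀ x ∈ l, x ∈ M) → l.length = s → l.prod = 0} := by
    constructor
    · intro r x hx
      simp_all [Submodule.mem_bot]
    · refine ⟨1, fun l hl hlen => ?_⟩
      rw [List.length_eq_one_iff] at hlen
      obtain ⟨w, rfl⟩ := hlen
      simpa using Submodule.mem_bot _ |>.mp (hl w (by simp))
  obtain ⟨M, hM, hMmax⟩ := (set_has_maximal_iff_noetherian.mpr inferInstance) _ ⟨⊥, hbot⟩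
  obtain ⟨hMl, s, hMs⟩ := hM
  suffices hsub : ∀ b : R, b * e = 0 → b ∈ M by
    exact ⟨s, fun l hl hlen => hMs l (fun x hx => hsub x (hl x hx)) hlen⟩
  by_contra hcon
  push_neg at hcon
  obtain ⟨a₀, ha₀e, ha₀M⟩ := hcon
  obtain ⟨J, hJ, hJmax⟩ := (set_has_maximal_iff_noetherian.mpr inferInstance)
    {J : Submodule Rᵐᵒᵖ R | ∃ b : R, b * e = 0 ∧ b ∉ M ∧ J = rannM M b}
    ⟨rannM M a₀, a₀, ha₀e, ha₀M, rfl⟩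
  obtain ⟨a, hae, haM, rfl⟩ := hJ
  have subclaim : ∀ u : R, a * u * a ∈ M := by
    intro u
    have huae : (u * a) * e = 0 := by rw [mul_assoc, hae, mul_zero]
    obtain ⟨t, ht⟩ := lem_nil he0 hA0 huae
    have hex : ∃ k : ℕ, (u * a) ^ (k + 1) ∈ M :=
      ⟨t, by rw [pow_succ, ht, zero_mul]; exact M.zero_mem⟩
    have hk₀ : (u * a) ^ (Nat.find hex + 1) ∈ M := Nat.find_spec hex
    rcases Nat.eq_zero_or_pos (Nat.find hex) with h0 | hpos
    · rw [h0, pow_one] at hk₀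
      have := hMl a (u * a) hk₀
      rwa [← mul_assoc] at this
    · set k := Nat.find hex - 1 with hkdef
      have hkk : Nat.find hex = k + 1 := by omega
      have hbM : (u * a) ^ (k + 1) ∉ M := by
        have := Nat.find_min hex (m := k) (by omega)
        simpa using this
      have hbe : (u * a) ^ (k + 1) * e = 0 := pow_mul_e huae k
      have hle : rannM M a ≤ rannM M ((u * a) ^ (k + 1)) := by
        intro y hy
        rw [mem_rannM] at *
        have heq : (u * a) ^ (k + 1) * y = ((u * a) ^ k * u) * (a * y) := by
          simp [pow_succ, mul_assoc]
        rw [heq]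
        exact hMl _ _ hy
      have hequal : rannM M a = rannM M ((u * a) ^ (k + 1)) := by
        by_contra hne
        exact hJmax (rannM M ((u * a) ^ (k + 1)))
          ⟨(u * a) ^ (k + 1), hbe, hbM, rfl⟩ (lt_of_le_of_ne hle hne)
      have hua : u * a ∈ rannM M ((u * a) ^ (k + 1)) := by
        rw [mem_rannM, ← pow_succ, ← hkk]
        exact hk₀
      rw [← hequal, mem_rannM, ← mul_assoc] at hua
      exact hua
  have hSPgen : ∀ r s : R, r * a * s ∈ Submodule.span Rᵐᵒᵖ {w : R | ∃ r s, w = r * a * s} :=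
    fun r s => Submodule.subset_span ⟨r, s, rfl⟩
  have hSPl : ∀ (r : R), ∀ x ∈ Submodule.span Rᵐᵒᵖ {w : R | ∃ r s, w = r * a * s},
      r * x ∈ Submodule.span Rᵐᵒᵖ {w : R | ∃ r s, w = r * a * s} := by
    intro r x hx
    induction hx using Submodule.span_induction with
    | mem w hw =>
      obtain ⟨r', s', rfl⟩ := hw
      rw [← mul_assoc, ← mul_assoc]
      exact hSPgen _ _
    | zero => simp
    | add x y _ _ hx hy =>
      rw [mul_add]
      exact Submodule.add_mem _ hx hy
    | smul c x _ hx =>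
      rw [MulOpposite.smul_eq_mul_unop, ← mul_assoc]
      exact Submodule.smul_mem _ c hx
  have hgen : ∀ r t : R, ∀ y ∈ Submodule.span Rᵐᵒᵖ {w : R | ∃ r s, w = r * a * s},
      (r * a * t) * y ∈ M := by
    intro r t y hy
    induction hy using Submodule.span_induction with
    | mem w hw =>
      obtain ⟨r', t', rfl⟩ := hw
      have heq : (r * a * t) * (r' * a * t') = (r * (a * (t * r') * a)) * t' := by
        simp [mul_assoc]
      rw [heq]
      exact M.smul_mem (MulOpposite.op t') (hMl r _ (subclaim (t * r')))
    | zero => simpa using M.zero_mem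
    | add x y _ _ hx hy =>
      rw [mul_add]
      exact M.add_mem hx hy
    | smul c x _ hx =>
      rw [MulOpposite.smul_eq_mul_unop, ← mul_assoc]
      exact M.smul_mem c hx
  have hSS : ∀ x ∈ Submodule.span Rᵐᵒᵖ {w : R | ∃ r s, w = r * a * s},
      ∀ y ∈ Submodule.span Rᵐᵒᵖ {w : R | ∃ r s, w = r * a * s}, x * y ∈ M := by
    intro x hx
    induction hx using Submodule.span_induction with
    | mem w hw =>
      obtain ⟨r', t', rfl⟩ := hw
      exact hgen r' t'
    | zero => intro y _; simpa using M.zero_mem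
    | add x y _ _ hx hy =>
      intro z hz
      rw [add_mul]
      exact M.add_mem (hx z hz) (hy z hz)
    | smul c x _ hx =>
      intro z hz
      rw [MulOpposite.smul_eq_mul_unop, mul_assoc]
      exact hx _ (hSPl _ z hz)
  have hKl : ∀ (r : R), ∀ x ∈ M ⊔ Submodule.span Rᵐᵒᵖ {w : R | ∃ r s, w = r * a * s},
      r * x ∈ M ⊔ Submodule.span Rᵐᵒᵖ {w : R | ∃ r s, w = r * a * s} := by
    intro r x hx
    rw [Submodule.mem_sup] at *
    obtain ⟨p, hp, q, hq, rfl⟩ := hx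
    exact ⟨r * p, hMl r p hp, r * q, hSPl r q hq, (mul_add r p q).symm⟩
  have hKK : ∀ x ∈ M ⊔ Submodule.span Rᵐᵒᵖ {w : R | ∃ r s, w = r * a * s},
      ∀ y ∈ M ⊔ Submodule.span Rᵐᵒᵖ {w : R | ∃ r s, w = r * a * s}, x * y ∈ M := by
    intro x hx y hy
    rw [Submodule.mem_sup] at hx hy
    obtain ⟨p, hp, q, hq, rfl⟩ := hx
    obtain ⟨p', hp', q', hq', rfl⟩ := hy
    have h1 : p * (p' + q') ∈ M := M.smul_mem (MulOpposite.op (p' + q')) hp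
    have h2 : q * p' ∈ M := hMl q p' hp'
    have h3 : q * q' ∈ M := hSS q hq q' hq'
    rw [add_mul, mul_add q]
    exact M.add_mem h1 (M.add_mem h2 h3)
  have hKnilp : ∀ l : List R,
      (∀ x ∈ l, x ∈ M ⊔ Submodule.span Rᵐᵒᵖ {w : R | ∃ r s, w = r * a * s}) →
      l.length = 2 * s → l.prod = 0 := by
    intro l hl hlen
    obtain ⟨l', h1, h2, h3⟩ := pair_up (fun x y hx hy => hKK x hx y hy) s l hl hlen
    rw [← h3]
    exact hMs l' h1 h2
  have haK : a ∈ M ⊔ Submodule.span Rᵐᵒᵖ {w : R | ∃ r s, w = r * a * s} :=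
    Submodule.mem_sup_right (by simpa using hSPgen 1 1)
  exact hMmax _ ⟨hKl, 2 * s, hKnilp⟩
    (lt_of_le_of_ne le_sup_left (fun h => haM (h ▸ haK)))

end levitzki

section powers
variable (e : R)

/-- Powers of the right annihilator ideal of `e`, as right submodules. -/
def mp : ℕ → Submodule Rᵐᵒᵖ R
  | 0 => ⊤
  | (k + 1) => Submodule.span Rᵐᵒᵖ {x : R | ∃ p y, p * e = 0 ∧ y ∈ mp k ∧ x = p * y}

lemma mp_left : ∀ (k : ℕ) (r x : R), x ∈ mp e k → r * x ∈ mp e k := by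
  intro k
  cases k with
  | zero => intro r x _; exact Submodule.mem_top
  | succ k =>
    intro r x hx
    induction hx using Submodule.span_induction with
    | mem w hw =>
      obtain ⟨p, y, hp, hy, rfl⟩ := hw
      rw [← mul_assoc]
      exact Submodule.subset_span ⟨r * p, y, by rw [mul_assoc, hp, mul_zero], hy, rfl⟩
    | zero => simp
    | add x y _ _ hx hy =>
      rw [mul_add]
      exact Submodule.add_mem _ hx hy
    | smul c x _ hx =>
      rw [MulOpposite.smul_eq_mul_unop, ← mul_assoc]
      exact Submodule.smul_mem _ c hx

lemma mp_succ_le : ∀ k : ℕ, mp e (k + 1) ≤ mp e k := by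
  intro k
  induction k with
  | zero => exact le_top
  | succ k ih =>
    rw [show mp e (k + 1 + 1) = Submodule.span Rᵐᵒᵖ
      {x : R | ∃ p y, p * e = 0 ∧ y ∈ mp e (k + 1) ∧ x = p * y} from rfl, Submodule.span_le]
    rintro w ⟨p, y, hp, hy, rfl⟩
    exact Submodule.subset_span ⟨p, y, hp, ih hy, rfl⟩

lemma mp_mul_right : ∀ (k : ℕ), ∀ x ∈ mp e k, ∀ p : R, p * e = 0 → x * p ∈ mp e (k + 1) := by
  intro k
  induction k with
  | zero =>
    intro x _ p hp
    exact Submodule.subset_span ⟨x * p, 1,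
      by rw [mul_assoc, hp, mul_zero], Submodule.mem_top, (mul_one _).symm⟩
  | succ k ih =>
    intro x hx
    induction hx using Submodule.span_induction with
    | mem w hw =>
      obtain ⟨q, y, hq, hy, rfl⟩ := hw
      intro p hp
      rw [mul_assoc]
      exact Submodule.subset_span ⟨q, y * p, hq, ih y hy p hp, rfl⟩
    | zero => intro p _; rw [zero_mul]; exact Submodule.zero_mem _
    | add x y _ _ hx hy =>
      intro p hp
      rw [add_mul]
      exact Submodule.add_mem _ (hx p hp) (hy p hp)
    | smul c x _ hx =>
      intro p hp
      rw [MulOpposite.smul_eq_mul_unop, mul_assoc]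
      have : (MulOpposite.unop c * p) * e = 0 := by rw [mul_assoc, hp, mul_zero]
      exact hx _ this

lemma mp_zero {N : ℕ}
    (hlev : ∀ l : List R, (∀ x ∈ l, x * e = 0) → l.length = N → l.prod = 0) :
    ∀ x ∈ mp e N, x = 0 := by
  have aux : ∀ (k j : ℕ), j + k = N → ∀ x ∈ mp e k, ∀ l : List R,
      (∀ w ∈ l, w * e = 0) → l.length = j → l.prod * x = 0 := by
    intro k
    induction k with
    | zero =>
      intro j hj x _ l hl hlen
      rw [hlev l hl (by omega), zero_mul]
    | succ k ih =>
      intro j hj x hx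
      induction hx using Submodule.span_induction with
      | mem w hw =>
        obtain ⟨p, y, hp, hy, rfl⟩ := hw
        intro l hl hlen
        have heq : l.prod * (p * y) = (l ++ [p]).prod * y := by
          rw [List.prod_append, List.prod_singleton, mul_assoc]
        rw [heq]
        refine ih (j + 1) (by omega) y hy (l ++ [p]) ?_ (by simp [hlen])
        intro w hw
        rcases List.mem_append.mp hw with hw | hw
        · exact hl w hw
        · rw [List.mem_singleton.mp hw]; exact hp
      | zero => intro l _ _; rw [mul_zero]
      | add x y _ _ hx hy =>
        intro l hl hlen
        rw [mul_add, hx l hl hlen, hy l hl hlen, add_zero]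
      | smul c x _ hx =>
        intro l hl hlen
        rw [MulOpposite.smul_eq_mul_unop, ← mul_assoc, hx l hl hlen, zero_mul]
  intro x hx
  have := aux N 0 (by omega) x hx [] (by simp) rfl
  rwa [List.prod_nil, one_mul] at this

/-- left annihilators of the powers, as right submodules -/
def annR (k : ℕ) : Submodule Rᵐᵒᵖ R where
  carrier := {x | ∀ y ∈ mp e k, x * y = 0}
  add_mem' := by
    intro x y hx hy z hz
    rw [add_mul, hx z hz, hy z hz, add_zero]
  zero_mem' := by
    intro z _
    rw [zero_mul]
  smul_mem' := by
    intro c x hx z hz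
    rw [MulOpposite.smul_eq_mul_unop, mul_assoc]
    exact hx _ (mp_left e k _ z hz)

/-- left annihilators of the powers, as left submodules -/
def annL (k : ℕ) : Submodule R R where
  carrier := {x | ∀ y ∈ mp e k, x * y = 0}
  add_mem' := by
    intro x y hx hy z hz
    rw [add_mul, hx z hz, hy z hz, add_zero]
  zero_mem' := by
    intro z _
    rw [zero_mul]
  smul_mem' := by
    intro c x hx z hz
    rw [smul_eq_mul, mul_assoc, hx z hz, mul_zero]

lemma mem_annR {k : ℕ} {x : R} : x ∈ annR e k ↔ ∀ y ∈ mp e k, x * y = 0 := Iff.rfl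
lemma mem_annL {k : ℕ} {x : R} : x ∈ annL e k ↔ ∀ y ∈ mp e k, x * y = 0 := Iff.rfl

lemma annR_zero : annR e 0 = ⊥ := by
  ext x
  simp only [mem_annR, Submodule.mem_bot]
  constructor
  · intro h
    simpa using h 1 Submodule.mem_top
  · rintro rfl y _
    rw [zero_mul]

lemma annL_zero : annL e 0 = ⊥ := by
  ext x
  simp only [mem_annL, Submodule.mem_bot]
  constructor
  · intro h
    simpa using h 1 Submodule.mem_top
  · rintro rfl y _
    rw [zero_mul]

lemma annR_mono (k : ℕ) : annR e k ≤ annR e (k + 1) :=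
  fun _ hx y hy => hx y (mp_succ_le e k hy)

lemma annL_mono (k : ℕ) : annL e k ≤ annL e (k + 1) :=
  fun _ hx y hy => hx y (mp_succ_le e k hy)

lemma annR_top {N : ℕ}
    (hlev : ∀ l : List R, (∀ x ∈ l, x * e = 0) → l.length = N → l.prod = 0) :
    annR e N = ⊤ := by
  rw [eq_top_iff]
  intro x _ y hy
  rw [mp_zero e hlev y hy, mul_zero]

lemma annL_top {N : ℕ}
    (hlev : ∀ l : List R, (∀ x ∈ l, x * e = 0) → l.length = N → l.prod = 0) :
    annL e N = ⊤ := by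
  rw [eq_top_iff]
  intro x _ y hy
  rw [mp_zero e hlev y hy, mul_zero]

lemma annR_kill {k : ℕ} {x p : R} (hx : x ∈ annR e (k + 1)) (hp : p * e = 0) :
    x * p ∈ annR e k := by
  intro y hy
  rw [mul_assoc]
  exact hx _ (Submodule.subset_span ⟨p, y, hp, hy, rfl⟩)

end powers

section socle
variable (e : R)

/-- The socle: elements killing every right annihilator of `e`, as a left submodule. -/
def Tr : Submodule R R where
  carrier := {z | ∀ p : R, p * e = 0 → z * p = 0}
  add_mem' := by
    intro x y hx hy p hp
    rw [add_mul, hx p hp, hy p hp, add_zero]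
  zero_mem' := fun p _ => zero_mul p
  smul_mem' := by
    intro c x hx p hp
    rw [smul_eq_mul, mul_assoc, hx p hp, mul_zero]

lemma mem_Tr {z : R} : z ∈ Tr e ↔ ∀ p : R, p * e = 0 → z * p = 0 := Iff.rfl

lemma e_mem_Tr (hcomm : ∀ g : R, g * e = e * g) : e ∈ Tr e := by
  intro p hp
  rw [← hcomm p, hp]

lemma isArtinian_of_trivial_lattice {S : Type*} {M : Type*} [Ring S] [AddCommGroup M]
    [Module S M] (h : ∀ X : Submodule S M, X = ⊥ ∨ X = ⊤) : IsArtinian S M := by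
  have hacc : Acc (· < ·) (⊥ : Submodule S M) := by
    constructor
    intro Y hY
    exact absurd hY (by simp)
  constructor
  constructor
  intro X
  rcases h X with rfl | rfl
  · exact hacc
  · constructor
    intro Y hY
    rcases h Y with rfl | rfl
    · exact hacc
    · exact absurd hY (lt_irrefl _)

section
variable [IsNoetherian Rᵐᵒᵖ R] (he0 : e ≠ 0)
  (hcomm : ∀ g : R, g * e = e * g)
  (hce : IsCentrallyEssential R)
  (hA0 : ∀ a : R, a ≠ 0 → ∃ s, e = a * s)
  (hA0' : ∀ a : R, a ≠ 0 → ∃ s, e = s * a)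

include he0 hcomm hce hA0 hA0'

lemma Tr_repr {w : R} (hwT : w ∈ Tr e) (hw : w ≠ 0) : ∃ u : Rˣ, w = ↑u⁻¹ * e := by
  obtain ⟨sw, hsw⟩ := hA0' w hw
  have hswe : sw * e ≠ 0 := by
    intro h
    have h1 : w * sw = 0 := hwT sw h
    have h2 : sw * w = w * sw := lem_central hcomm hce hA0' hwT sw
    exact he0 (by rw [hsw, h2, h1])
  obtain ⟨u, hu⟩ := lem_unit he0 hcomm hce hA0 hA0' hswe
  refine ⟨u, ?_⟩
  calc w = 1 * w := (one_mul _).symm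
  _ = (↑u⁻¹ * sw) * w := by rw [← hu, u.inv_mul]
  _ = ↑u⁻¹ * e := by rw [mul_assoc, ← hsw]

lemma Tr_simple (X : Submodule R (Tr e)) : X = ⊥ ∨ X = ⊤ := by
  rcases eq_or_ne X ⊥ with h | h
  · exact Or.inl h
  right
  obtain ⟨z, hzX, hz0⟩ := Submodule.exists_mem_ne_zero_of_ne_bot h
  have hzv : (z : R) ≠ 0 := fun hh => hz0 (by exact Subtype.ext hh)
  obtain ⟨v, hv⟩ := Tr_repr e he0 hcomm hce hA0 hA0' z.2 hzv
  rw [Submodule.eq_top_iff']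
  intro w
  by_cases hw : (w : R) = 0
  · have : w = 0 := Subtype.ext hw
    rw [this]
    exact X.zero_mem
  obtain ⟨u, hu⟩ := Tr_repr e he0 hcomm hce hA0 hA0' w.2 hw
  have hval : (w : R) = (↑u⁻¹ * ↑v) * (z : R) := by
    rw [hu, hv, mul_assoc, ← mul_assoc (↑v : R), v.mul_inv, one_mul]
  have : w = (↑u⁻¹ * ↑v : R) • z := by
    apply Subtype.ext
    rw [SetLike.val_smul, smul_eq_mul, hval]
  rw [this]
  exact X.smul_mem _ hzX

end

end socle

section artinianTools

lemma isArtinian_sup {S M : Type*} [Ring S] [AddCommGroup M] [Module S M]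
    (N₁ N₂ : Submodule S M) (h1 : IsArtinian S N₁) (h2 : IsArtinian S N₂) :
    IsArtinian S ↥(N₁ ⊔ N₂) := by
  let f : (N₁ × N₂) →ₗ[S] ↥(N₁ ⊔ N₂) :=
    { toFun := fun p => ⟨p.1.val + p.2.val,
        Submodule.add_mem _ (Submodule.mem_sup_left p.1.2) (Submodule.mem_sup_right p.2.2)⟩
      map_add' := by
        intro p q
        apply Subtype.ext
        simp only [Submodule.coe_add, Prod.fst_add, Prod.snd_add]
        abel
      map_smul' := by
        intro c p
        apply Subtype.ext
        simp [smul_add] }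
  have hsurj : Function.Surjective f := by
    rintro ⟨y, hy⟩
    obtain ⟨a, ha, b, hb, rfl⟩ := Submodule.mem_sup.mp hy
    exact ⟨(⟨a, ha⟩, ⟨b, hb⟩), rfl⟩
  exact isArtinian_of_surjective _ f hsurj

lemma isArtinian_of_eq_bot {S M : Type*} [Ring S] [AddCommGroup M] [Module S M]
    {N : Submodule S M} (h : N = ⊥) : IsArtinian S ↥N := by
  apply isArtinian_of_trivial_lattice
  intro X
  left
  rw [Submodule.eq_bot_iff]
  intro x _
  apply Subtype.ext
  have hz : (x : M) = 0 := (Submodule.eq_bot_iff N).mp h x.val x.2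
  simpa using hz

variable {e : R}

lemma isArtinian_span_singleton (hUnit : ∀ x : R, x * e ≠ 0 → IsUnit x)
    {Q : Type*} [AddCommGroup Q] [Module Rᵐᵒᵖ Q]
    (hkill : ∀ (q : Q) (p : R), p * e = 0 → (MulOpposite.op p) • q = 0)
    (v : Q) : IsArtinian Rᵐᵒᵖ ↥(Submodule.span Rᵐᵒᵖ {v}) := by
  apply isArtinian_of_trivial_lattice
  intro X
  rcases eq_or_ne X ⊥ with h | h
  · exact Or.inl h
  right
  obtain ⟨z, hzX, hz0⟩ := Submodule.exists_mem_ne_zero_of_ne_bot h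
  obtain ⟨c, hc⟩ := Submodule.mem_span_singleton.mp z.2
  have hce0 : (MulOpposite.unop c) * e ≠ 0 := by
    intro hh
    apply hz0
    apply Subtype.ext
    have := hkill v (MulOpposite.unop c) hh
    rw [MulOpposite.op_unop] at this
    rw [← hc, this]
    rfl
  obtain ⟨u, hu⟩ := hUnit _ hce0
  have hvz : v = (MulOpposite.op (↑u⁻¹ : R)) • (z : Q) := by
    have hone : (MulOpposite.op (↑u⁻¹ : R)) * c = 1 := by
      rw [← MulOpposite.op_unop c, ← MulOpposite.op_mul, ← hu, u.mul_inv]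
      rfl
    rw [← hc, smul_smul, hone, one_smul]
  rw [Submodule.eq_top_iff']
  intro w
  obtain ⟨d, hd⟩ := Submodule.mem_span_singleton.mp w.2
  have hval : (w : Q) = (d * MulOpposite.op (↑u⁻¹ : R)) • (z : Q) := by
    rw [mul_smul, ← hvz, hd]
  have : w = (d * MulOpposite.op (↑u⁻¹ : R)) • z := by
    apply Subtype.ext
    rw [SetLike.val_smul, hval]
  rw [this]
  exact X.smul_mem _ hzX

lemma isArtinian_right_killed (hUnit : ∀ x : R, x * e ≠ 0 → IsUnit x)
    {Q : Type*} [AddCommGroup Q] [Module Rᵐᵒᵖ Q]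
    (hkill : ∀ (q : Q) (p : R), p * e = 0 → (MulOpposite.op p) • q = 0)
    (hfg : Module.Finite Rᵐᵒᵖ Q) : IsArtinian Rᵐᵒᵖ Q := by
  obtain ⟨s, hs⟩ := hfg.fg_top
  have main : ∀ L : List Q, IsArtinian Rᵐᵒᵖ ↥(Submodule.span Rᵐᵒᵖ {x : Q | x ∈ L}) := by
    intro L
    induction L with
    | nil =>
      apply isArtinian_of_eq_bot
      have hset : {x : Q | x ∈ ([] : List Q)} = (∅ : Set Q) := by ext x; simp
      rw [hset, Submodule.span_empty]
    | cons a L ih =>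
      have hset : {x : Q | x ∈ a :: L} = insert a {x : Q | x ∈ L} := by ext x; simp
      rw [hset, Submodule.span_insert]
      exact isArtinian_sup _ _ (isArtinian_span_singleton hUnit hkill a) ih
  have hfin := main s.toList
  have hset : {x : Q | x ∈ s.toList} = (↑s : Set Q) := by ext x; simp
  rw [hset, hs] at hfin
  exact @isArtinian_of_linearEquiv Rᵐᵒᵖ _ Q _ _ _ _ _ Submodule.topEquiv hfin

end artinianTools

section chains
variable [IsNoetherian Rᵐᵒᵖ R] (e : R)

lemma isArtinian_annR (hUnit : ∀ x : R, x * e ≠ 0 → IsUnit x) :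
    ∀ k : ℕ, IsArtinian Rᵐᵒᵖ ↥(annR e k) := by
  intro k
  induction k with
  | zero => exact isArtinian_of_eq_bot (annR_zero e)
  | succ k ih =>
    letI := ih
    letI : Module.Finite Rᵐᵒᵖ ↥(annR e (k + 1)) := ⟨IsNoetherian.noetherian ⊤⟩
    have hq : IsArtinian Rᵐᵒᵖ
        (↥(annR e (k + 1)) ⧸ ((annR e k).comap (annR e (k + 1)).subtype)) := by
      apply isArtinian_right_killed hUnit
      · intro q p hp
        obtain ⟨x, rfl⟩ := Submodule.Quotient.mk_surjective _ q
        have hmk : (MulOpposite.op p) • (Submodule.Quotient.mk x :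
            ↥(annR e (k + 1)) ⧸ ((annR e k).comap (annR e (k + 1)).subtype))
            = Submodule.Quotient.mk ((MulOpposite.op p) • x) := rfl
        rw [hmk, Submodule.Quotient.mk_eq_zero]
        show ((MulOpposite.op p • x : ↥(annR e (k + 1))) : R) ∈ annR e k
        have hval : ((MulOpposite.op p • x : ↥(annR e (k + 1))) : R) = (x : R) * p := rfl
        rw [hval]
        exact annR_kill e x.2 hp
      · exact Module.Finite.of_surjective (Submodule.mkQ _) (Submodule.Quotient.mk_surjective _)
    exact isArtinian_of_range_eq_ker (Submodule.inclusion (annR_mono e k))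
      (Submodule.mkQ ((annR e k).comap (annR e (k + 1)).subtype))
      (by rw [Submodule.range_inclusion, Submodule.ker_mkQ])

lemma isArtinian_annL (he0 : e ≠ 0)
    (hcomm : ∀ g : R, g * e = e * g)
    (hce : IsCentrallyEssential R)
    (hA0 : ∀ a : R, a ≠ 0 → ∃ s, e = a * s)
    (hA0' : ∀ a : R, a ≠ 0 → ∃ s, e = s * a) :
    ∀ k : ℕ, IsArtinian R ↥(annL e k) := by
  intro k
  induction k with
  | zero => exact isArtinian_of_eq_bot (annL_zero e)
  | succ k ih =>
    letI := ih
    letI : IsArtinian R ↥(Tr e) :=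
      isArtinian_of_trivial_lattice (Tr_simple e he0 hcomm hce hA0 hA0')
    obtain ⟨s, hs⟩ := IsNoetherian.noetherian (mp e k)
    have hTmem : ∀ (x : ↥(annL e (k + 1))) (i : {y // y ∈ s}), (x : R) * i.val ∈ Tr e := by
      intro x i p hp
      have hi : (i.val : R) ∈ mp e k := by
        rw [← hs]
        exact Submodule.subset_span i.2
      rw [mul_assoc]
      exact x.2 _ (mp_mul_right e k _ hi p hp)
    let θ : ↥(annL e (k + 1)) →ₗ[R] ({y // y ∈ s} → ↥(Tr e)) :=
      { toFun := fun x => fun i => ⟨(x : R) * i.val, hTmem x i⟩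
        map_add' := by
          intro x y
          funext i
          apply Subtype.ext
          simp [add_mul]
        map_smul' := by
          intro c x
          funext i
          apply Subtype.ext
          simp [mul_assoc] }
    have hker : LinearMap.ker θ = (annL e k).comap (annL e (k + 1)).subtype := by
      ext x
      simp only [LinearMap.mem_ker, Submodule.mem_comap, Submodule.coe_subtype]
      constructor
      · intro hθ
        intro y hy
        rw [← hs] at hy
        induction hy using Submodule.span_induction with
        | mem w hw =>
          have := congrFun hθ ⟨w, hw⟩
          exact Subtype.ext_iff.mp this
        | zero => rw [mul_zero]
        | add y z _ _ hy hz => rw [mul_add, hy, hz, add_zero]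
        | smul c y _ hy =>
          rw [MulOpposite.smul_eq_mul_unop, ← mul_assoc, hy, zero_mul]
      · intro hx
        funext i
        apply Subtype.ext
        show (x : R) * i.val = 0
        apply hx
        rw [← hs]
        exact Submodule.subset_span i.2
    have hq : IsArtinian R
        (↥(annL e (k + 1)) ⧸ ((annL e k).comap (annL e (k + 1)).subtype)) := by
      have hle : (annL e k).comap (annL e (k + 1)).subtype ≤ LinearMap.ker θ := le_of_eq hker.symm
      have hinj : Function.Injective (Submodule.liftQ _ θ hle) := by
        rw [← LinearMap.ker_eq_bot]
        exact Submodule.ker_liftQ_eq_bot _ _ _ (le_of_eq hker)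
      exact isArtinian_of_injective _ hinj
    exact isArtinian_of_range_eq_ker (Submodule.inclusion (annL_mono e k)) (Submodule.mkQ _)
      (by rw [Submodule.range_inclusion, Submodule.ker_mkQ])

end chains

/-- Factorization through any nonzero element, using the heart of a subdirectly
indecomposable ring. -/
lemma exists_factor {e : R} (heH : e ∈ sInf {I : TwoSidedIdeal R | I ≠ ⊥})
    (hce : IsCentrallyEssential R) {b : R} (hb : b ≠ 0) :
    (∃ t, e = b * t) ∧ (∃ t, e = t * b) := by
  obtain ⟨cb, hcbC, hz0, hzC⟩ := hce b hb
  have hzcomm : ∀ g : R, g * (b * cb) = (b * cb) * g := Semigroup.mem_center_iff.mp hzC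
  have hccomm : ∀ g : R, g * cb = cb * g := Semigroup.mem_center_iff.mp hcbC
  let J : TwoSidedIdeal R := TwoSidedIdeal.mk' {w | ∃ t, w = t * (b * cb)}
    ⟨0, (zero_mul _).symm⟩
    (by rintro x y ⟨t1, rfl⟩ ⟨t2, rfl⟩; exact ⟨t1 + t2, (add_mul _ _ _).symm⟩)
    (by rintro x ⟨t, rfl⟩; exact ⟨-t, (neg_mul _ _).symm⟩)
    (by rintro x y ⟨t, rfl⟩; exact ⟨x * t, (mul_assoc _ _ _).symm⟩)
    (by
      rintro x y ⟨t, rfl⟩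
      refine ⟨t * y, ?_⟩
      rw [mul_assoc, ← hzcomm y, ← mul_assoc])
  have hJne : J ≠ ⊥ := by
    intro hJbot
    apply hz0
    have hmem : b * cb ∈ J := by
      rw [TwoSidedIdeal.mem_mk']
      exact ⟨1, (one_mul _).symm⟩
    rw [hJbot] at hmem
    rwa [TwoSidedIdeal.mem_bot] at hmem
  have heJ : e ∈ J := by
    rw [TwoSidedIdeal.mem_sInf] at heH
    exact heH J hJne
  obtain ⟨t, ht⟩ : ∃ t, e = t * (b * cb) := by rwa [TwoSidedIdeal.mem_mk'] at heJ
  constructor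
  · exact ⟨cb * t, by rw [ht, hzcomm t, mul_assoc]⟩
  · exact ⟨t * cb, by rw [ht, hccomm b, ← mul_assoc]⟩

end CEaux

/-- A right Noetherian, subdirectly indecomposable, centrally essential ring is a local
ring which is both right and left Artinian. -/
theorem centrallyEssential_rightNoetherian_subdirectlyIndecomposable
    (R : Type*) [Ring R] [Nontrivial R]
    [IsNoetherian Rᵐᵒᵖ R]
    (hsi : IsSubdirectlyIndecomposable R)
    (hce : IsCentrallyEssential R) :
    IsLocalRing R ∧ IsArtinian Rᵐᵒᵖ R ∧ IsArtinianRing R := by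
  classical
  have hH : ∃ a : R, a ∈ sInf {I : TwoSidedIdeal R | I ≠ ⊥} ∧ a ≠ 0 := by
    by_contra h
    push_neg at h
    apply hsi
    refine SetLike.ext fun x => ?_
    rw [TwoSidedIdeal.mem_bot]
    constructor
    · intro hx; exact h x hx
    · rintro rfl; exact zero_mem _
  obtain ⟨a, haH, ha0⟩ := hH
  obtain ⟨c, hcC, he0, heC⟩ := hce a ha0
  have heH : a * c ∈ sInf {I : TwoSidedIdeal R | I ≠ ⊥} :=
    TwoSidedIdeal.mul_mem_right _ _ _ haH
  have hcomm : ∀ g : R, g * (a * c) = (a * c) * g := Semigroup.mem_center_iff.mp heC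
  have hA0 : ∀ b : R, b ≠ 0 → ∃ t, (a * c) = b * t :=
    fun b hb => (CEaux.exists_factor heH hce hb).1
  have hA0' : ∀ b : R, b ≠ 0 → ∃ t, (a * c) = t * b :=
    fun b hb => (CEaux.exists_factor heH hce hb).2
  have hUnit : ∀ x : R, x * (a * c) ≠ 0 → IsUnit x :=
    fun x hx => CEaux.lem_unit he0 hcomm hce hA0 hA0' hx
  have hlocal : IsLocalRing R := by
    constructor
    intro x y hxy
    by_cases hx : IsUnit x
    · exact Or.inl hx
    by_cases hy : IsUnit y
    · exact Or.inr hy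
    exfalso
    have hxe : x * (a * c) = 0 := by
      by_contra h
      exact hx (hUnit x h)
    have hye : y * (a * c) = 0 := by
      by_contra h
      exact hy (hUnit y h)
    apply he0
    calc a * c = (x + y) * (a * c) := by rw [hxy, one_mul]
    _ = 0 := by rw [add_mul, hxe, hye, add_zero]
  obtain ⟨N, hN⟩ := CEaux.lem_levitzki he0 hA0
  have hart1 : IsArtinian Rᵐᵒᵖ R := by
    have hh := CEaux.isArtinian_annR (a * c) hUnit N
    rw [CEaux.annR_top (a * c) hN] at hh
    exact @isArtinian_of_linearEquiv _ _ _ _ _ _ _ _ Submodule.topEquiv hh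
  have hart2 : IsArtinianRing R := by
    have hh := CEaux.isArtinian_annL (a * c) he0 hcomm hce hA0 hA0' N
    rw [CEaux.annL_top (a * c) hN] at hh
    exact @isArtinian_of_linearEquiv _ _ _ _ _ _ _ _ Submodule.topEquiv hh
  exact ⟨hlocal, hart1, hart2⟩
end

section
/- Let R be a centrally essential ring whose center C(R) is a subdirectly indecomposable (commutative) ring. Then R is both right subdirectly indecomposable and left subdirectly indecomposable. -/
/-- If `R` is a centrally essential ring whose center is a subdirectly indecomposable
(commutative) ring, then `R` is right subdirectly indecomposable and left subdirectly
indecomposable. (Right ideals are `Submodule Rᵐᵒᵖ R`, left ideals are `Ideal R`.) -/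
theorem centrallyEssential_centerSubdirectlyIndecomposable
    (R : Type*) [Ring R] [Nontrivial R]
    (hce : IsCentrallyEssential R)
    (hc : sInf {I : Ideal (Subring.center R) | I ≠ ⊥} ≠ ⊥) :
    sInf {S : Submodule Rᵐᵒᵖ R | S ≠ ⊥} ≠ ⊥ ∧ sInf {S : Ideal R | S ≠ ⊥} ≠ ⊥ := by
  obtain ⟨h, hH, hne⟩ := Submodule.ne_bot_iff _ |>.mp hc
  have hcoe : (h : R) ≠ 0 := fun H => hne (Subtype.ext H)
  have key : ∀ a : R, a ≠ 0 → ∃ r : R, r ∈ Set.center R ∧ (h : R) = a * r := by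
    intro a ha
    obtain ⟨c, hc1, hac, hac2⟩ := hce a ha
    set e : Subring.center R := ⟨a * c, hac2⟩ with he_def
    have he : e ≠ 0 := fun H => hac (by simpa [he_def] using congrArg Subtype.val H)
    have hspan : Ideal.span {e} ≠ ⊥ := by simpa [Ideal.span_singleton_eq_bot] using he
    obtain ⟨x, hx⟩ := Ideal.mem_span_singleton'.mp (sInf_le (s := {I : Ideal (Subring.center R) | I ≠ ⊥}) hspan hH)
    have hx' : (x : R) * (a * c) = (h : R) := congrArg Subtype.val hx
    refine ⟨c * (x : R), Set.mul_mem_center hc1 x.2, ?_⟩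
    have hxc : (x : R) ∈ Set.center R := x.2
    calc (h : R) = (x : R) * (a * c) := hx'.symm
      _ = (a * c) * (x : R) := hxc.comm _
      _ = a * (c * (x : R)) := mul_assoc _ _ _
  constructor
  · intro H
    apply hcoe
    have hmem : (h : R) ∈ sInf {S : Submodule Rᵐᵒᵖ R | S ≠ ⊥} := by
      rw [Submodule.mem_sInf]
      intro S hS
      obtain ⟨a, haS, ha⟩ := Submodule.ne_bot_iff _ |>.mp hS
      obtain ⟨r, _, hr⟩ := key a ha
      rw [hr, ← op_smul_eq_mul]
      exact S.smul_mem _ haS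
    rw [H] at hmem
    simpa using hmem
  · intro H
    apply hcoe
    have hmem : (h : R) ∈ sInf {S : Ideal R | S ≠ ⊥} := by
      rw [Submodule.mem_sInf]
      intro S hS
      obtain ⟨a, haS, ha⟩ := Submodule.ne_bot_iff _ |>.mp hS
      obtain ⟨r, hrc, hr⟩ := key a ha
      rw [hr, ← hrc.comm a]
      exact S.smul_mem r haS
    rw [H] at hmem
    simpa using hmem
end

section
/- Let R be a right Noetherian ring whose center C = C(R) is a subdirectly indecomposable commutative ring with core H (the least nonzero ideal of C). Then R is centrally essential if and only if for every nonzero element r ∈ R one has rC ∩ H ≠ 0. -/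
/-- Let `R` be a right Noetherian ring whose center `C` is subdirectly indecomposable
with core `H` (the least nonzero ideal of `C`). Then `R` is centrally essential iff
`rC ∩ H ≠ 0` for every nonzero `r ∈ R`. -/
theorem centrallyEssential_iff_core_meets
    (R : Type*) [Ring R] [Nontrivial R]
    [IsNoetherian Rᵐᵒᵖ R]
    (H : Ideal (Subring.center R)) (hH : H ≠ ⊥)
    (hcore : ∀ I : Ideal (Subring.center R), I ≠ ⊥ → H ≤ I) :
    IsCentrallyEssential R ↔
      ∀ r : R, r ≠ 0 → ∃ c : Subring.center R, ∃ h ∈ H,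
        ((h : Subring.center R) : R) = r * (c : R) ∧ r * (c : R) ≠ 0 := by
  constructor
  · intro hCE r hr
    obtain ⟨c, hc, hne, hcen⟩ := hCE r hr
    set x : Subring.center R := ⟨r * c, hcen⟩ with hx
    have hx0 : x ≠ 0 := by
      intro h
      apply hne
      simpa [hx] using congrArg (Subtype.val) h
    -- pick a nonzero element of H
    obtain ⟨h0, h0H, h0ne⟩ := Submodule.exists_mem_ne_zero_of_ne_bot hH
    have hspan : Ideal.span {x} ≠ ⊥ := by
      simp [Ideal.span_singleton_eq_bot, hx0]
    have h0mem : h0 ∈ Ideal.span {x} := hcore _ hspan h0H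
    obtain ⟨d, hd⟩ := Ideal.mem_span_singleton'.mp h0mem
    refine ⟨⟨c, hc⟩ * d, h0, h0H, ?_, ?_⟩
    all_goals
      have this : (h0 : R) = (d : R) * (r * c) := by rw [← hd]; rfl
      have hdcen : IsMulCentral (d : R) := d.2
      have key : (d : R) * (r * c) = r * (c * (d : R)) :=
        (hdcen.comm (r * c)).trans (mul_assoc r c (d : R))
    · push_cast
      rw [this, key]
    · intro h
      apply h0ne
      apply Subtype.ext
      push_cast at h
      rw [this, key]
      simpa using h
  · intro hmeet r hr
    obtain ⟨c, h0, h0H, heq, hne⟩ := hmeet r hr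
    refine ⟨(c : R), c.2, hne, ?_⟩
    rw [← heq]
    exact (h0 : Subring.center R).2
end

section
/- Let R be a centrally essential ring. Then the following are equivalent: (1) R is right subdirectly indecomposable; (2) R is left subdirectly indecomposable; (3) R is subdirectly indecomposable. Moreover, in each of these cases the right core H_r (intersection of all nonzero right ideals), the left core H_ℓ (intersection of all nonzero left ideals), and the core H (intersection of all nonzero two-sided ideals) all coincide. -/
section Aux

variable {R : Type*} [Ring R]

/-- The two-sided ideal `R z` generated by a central element `z`. -/
def centralSpan (z : R) (hz : z ∈ Set.center R) : TwoSidedIdeal R :=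
  TwoSidedIdeal.mk' {x | ∃ r, x = r * z}
    ⟨0, (zero_mul z).symm⟩
    (by rintro _ _ ⟨r, rfl⟩ ⟨s, rfl⟩; exact ⟨r + s, (add_mul r s z).symm⟩)
    (by rintro _ ⟨r, rfl⟩; exact ⟨-r, (neg_mul r z).symm⟩)
    (by rintro a _ ⟨r, rfl⟩; exact ⟨a * r, (mul_assoc a r z).symm⟩)
    (by rintro _ b ⟨r, rfl⟩
        exact ⟨r * b, by rw [mul_assoc, mul_assoc, hz.comm b]⟩)

lemma mem_centralSpan {z : R} (hz : z ∈ Set.center R) {x : R} :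
    x ∈ centralSpan z hz ↔ ∃ r, x = r * z :=
  TwoSidedIdeal.mem_mk' _ _ _ _ _ _ _

lemma self_mem_centralSpan {z : R} (hz : z ∈ Set.center R) : z ∈ centralSpan z hz :=
  (mem_centralSpan hz).2 ⟨1, (one_mul z).symm⟩

lemma tsi_eq_bot_iff (I : TwoSidedIdeal R) : I = ⊥ ↔ ∀ x ∈ I, x = 0 := by
  constructor
  · rintro rfl x hx; exact (TwoSidedIdeal.mem_bot R).1 hx
  · intro h
    exact SetLike.ext fun x => ⟨fun hx => (TwoSidedIdeal.mem_bot R).2 (h x hx),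
      fun hx => ((TwoSidedIdeal.mem_bot R).1 hx) ▸ I.zero_mem⟩

lemma centralSpan_ne_bot {z : R} (hz : z ∈ Set.center R) (h0 : z ≠ 0) :
    centralSpan z hz ≠ ⊥ := fun h =>
  h0 <| (tsi_eq_bot_iff _).1 h z (self_mem_centralSpan hz)

/-- A two-sided ideal viewed as a right ideal. -/
def toRight (I : TwoSidedIdeal R) : Submodule Rᵐᵒᵖ R where
  carrier := I
  add_mem' := I.add_mem
  zero_mem' := I.zero_mem
  smul_mem' r x hx := I.mul_mem_right _ _ hx

@[simp] lemma mem_toRight {I : TwoSidedIdeal R} {x : R} : x ∈ toRight I ↔ x ∈ I := Iff.rfl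

/-- A two-sided ideal viewed as a left ideal. -/
def toLeft (I : TwoSidedIdeal R) : Ideal R where
  carrier := I
  add_mem' := I.add_mem
  zero_mem' := I.zero_mem
  smul_mem' r x hx := I.mul_mem_left _ _ hx

@[simp] lemma mem_toLeft {I : TwoSidedIdeal R} {x : R} : x ∈ toLeft I ↔ x ∈ I := Iff.rfl

end Aux

/-- For a centrally essential ring `R`, right subdirect indecomposability, left subdirect
indecomposability and subdirect indecomposability are all equivalent, and in that case the
right core, the left core and the core coincide. (Right ideals are `Submodule Rᵐᵒᵖ R`,
left ideals are `Ideal R`, two-sided ideals are `TwoSidedIdeal R`; the cores are the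
infima of the sets of nonzero ideals of each kind.) -/
theorem centrallyEssential_subdirectlyIndecomposable_equiv
    (R : Type*) [Ring R] [Nontrivial R]
    (hce : IsCentrallyEssential R) :
    ((sInf {S : Submodule Rᵐᵒᵖ R | S ≠ ⊥} ≠ ⊥) ↔
        (sInf {I : TwoSidedIdeal R | I ≠ ⊥} ≠ ⊥)) ∧
    ((sInf {S : Ideal R | S ≠ ⊥} ≠ ⊥) ↔
        (sInf {I : TwoSidedIdeal R | I ≠ ⊥} ≠ ⊥)) ∧
    (sInf {I : TwoSidedIdeal R | I ≠ ⊥} ≠ ⊥ →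
      (SetLike.coe (sInf {S : Submodule Rᵐᵒᵖ R | S ≠ ⊥}) =
          SetLike.coe (sInf {I : TwoSidedIdeal R | I ≠ ⊥}) ∧
       SetLike.coe (sInf {S : Ideal R | S ≠ ⊥}) =
          SetLike.coe (sInf {I : TwoSidedIdeal R | I ≠ ⊥}))) := by
  -- The right core and the core coincide as sets, unconditionally.
  have hr : SetLike.coe (sInf {S : Submodule Rᵐᵒᵖ R | S ≠ ⊥}) =
      SetLike.coe (sInf {I : TwoSidedIdeal R | I ≠ ⊥}) := by
    ext x
    simp only [SetLike.mem_coe, Submodule.mem_sInf, TwoSidedIdeal.mem_sInf, Set.mem_setOf_eq]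
    constructor
    · intro hx I hI
      have hne : toRight I ≠ ⊥ := by
        intro h
        apply hI
        rw [tsi_eq_bot_iff]
        intro y hy
        simpa using (Submodule.eq_bot_iff _).1 h y hy
      exact hx (toRight I) hne
    · intro hx S hS
      obtain ⟨a, haS, ha0⟩ : ∃ a ∈ S, a ≠ 0 := by
        by_contra h
        push_neg at h
        exact hS ((Submodule.eq_bot_iff _).2 h)
      obtain ⟨c, hc, hz0, hz⟩ := hce a ha0
      have hzS : a * c ∈ S := S.smul_mem (MulOpposite.op c) haS
      have hxJ := hx (centralSpan (a * c) hz) (centralSpan_ne_bot hz hz0)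
      obtain ⟨r, rfl⟩ := (mem_centralSpan hz).1 hxJ
      rw [← hz.comm r]
      exact S.smul_mem (MulOpposite.op r) hzS
  -- The left core and the core coincide as sets, unconditionally.
  have hl : SetLike.coe (sInf {S : Ideal R | S ≠ ⊥}) =
      SetLike.coe (sInf {I : TwoSidedIdeal R | I ≠ ⊥}) := by
    ext x
    simp only [SetLike.mem_coe, Submodule.mem_sInf, TwoSidedIdeal.mem_sInf, Set.mem_setOf_eq]
    constructor
    · intro hx I hI
      have hne : toLeft I ≠ ⊥ := by
        intro h
        apply hI
        rw [tsi_eq_bot_iff]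
        intro y hy
        simpa using (Submodule.eq_bot_iff _).1 h y hy
      exact hx (toLeft I) hne
    · intro hx S hS
      obtain ⟨a, haS, ha0⟩ : ∃ a ∈ S, a ≠ 0 := by
        by_contra h
        push_neg at h
        exact hS ((Submodule.eq_bot_iff _).2 h)
      obtain ⟨c, hc, hz0, hz⟩ := hce a ha0
      have hzS : a * c ∈ S := by rw [← hc.comm a]; exact S.smul_mem c haS
      have hxJ := hx (centralSpan (a * c) hz) (centralSpan_ne_bot hz hz0)
      obtain ⟨r, rfl⟩ := (mem_centralSpan hz).1 hxJ
      exact S.smul_mem r hzS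
  -- translation between `≠ ⊥` and the coercions to sets
  have hrbot : (sInf {S : Submodule Rᵐᵒᵖ R | S ≠ ⊥} ≠ ⊥) ↔
      ∃ x ∈ SetLike.coe (sInf {S : Submodule Rᵐᵒᵖ R | S ≠ ⊥}), x ≠ 0 := by
    rw [ne_eq, Submodule.eq_bot_iff]
    push_neg
    rfl
  have hlbot : (sInf {S : Ideal R | S ≠ ⊥} ≠ ⊥) ↔
      ∃ x ∈ SetLike.coe (sInf {S : Ideal R | S ≠ ⊥}), x ≠ 0 := by
    rw [ne_eq, Submodule.eq_bot_iff]
    push_neg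
    rfl
  have htbot : (sInf {I : TwoSidedIdeal R | I ≠ ⊥} ≠ ⊥) ↔
      ∃ x ∈ SetLike.coe (sInf {I : TwoSidedIdeal R | I ≠ ⊥}), x ≠ 0 := by
    rw [ne_eq, tsi_eq_bot_iff]
    push_neg
    rfl
  refine ⟨?_, ?_, fun _ => ⟨hr, hl⟩⟩
  · rw [hrbot, htbot, hr]
  · rw [hlbot, htbot, hl]
end

section
/- Let R be a centrally essential ring. An element r ∈ R is regular (i.e., rx ≠ 0 and xr ≠ 0 for every nonzero x ∈ R) if and only if r is C(R)-torsion free (i.e., rc ≠ 0 for every nonzero central element c ∈ C(R)). -/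
/-- In a centrally essential ring, an element `r` is regular (not a left nor a right
zero-divisor) if and only if it is `C(R)`-torsion free (`r * c ≠ 0` for every nonzero
central `c`). -/
theorem centrallyEssential_regular_iff_centerTorsionFree
    (R : Type*) [Ring R] [Nontrivial R]
    (hce : IsCentrallyEssential R) (r : R) :
    ((∀ x : R, x ≠ 0 → r * x ≠ 0) ∧ (∀ x : R, x ≠ 0 → x * r ≠ 0)) ↔
      (∀ c ∈ Set.center R, c ≠ 0 → r * c ≠ 0) := by
  constructor
  · rintro ⟨hl, _⟩ c _ hc
    exact hl c hc
  · intro h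
    constructor
    · intro x hx hrx
      obtain ⟨c, hc, hxc, hxcC⟩ := hce x hx
      apply h (x * c) hxcC hxc
      rw [← mul_assoc, hrx, zero_mul]
    · intro x hx hxr
      obtain ⟨c, hc, hxc, hxcC⟩ := hce x hx
      apply h (x * c) hxcC hxc
      rw [← (Set.mem_center_iff.mp hxcC).comm r, mul_assoc,
        (Set.mem_center_iff.mp hc).comm r, ← mul_assoc, hxr, zero_mul]
end

section
/- In a centrally essential ring R, every one-sided zero-divisor is a two-sided zero-divisor: if r ∈ R satisfies rs = 0 for some nonzero s ∈ R, then there exists a nonzero d ∈ R (in fact a nonzero central d) with rd = dr = 0; symmetrically for left zero-divisors. -/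
/-- In a centrally essential ring, every one-sided zero-divisor is a two-sided
zero-divisor: there even is a nonzero central element annihilating it on both sides. -/
theorem centrallyEssential_oneSided_zeroDivisor_twoSided
    (R : Type*) [Ring R] [Nontrivial R]
    (hce : IsCentrallyEssential R) :
    (∀ r s : R, s ≠ 0 → r * s = 0 →
      ∃ d : R, d ≠ 0 ∧ d ∈ Set.center R ∧ r * d = 0 ∧ d * r = 0) ∧
    (∀ r s : R, s ≠ 0 → s * r = 0 →
      ∃ d : R, d ≠ 0 ∧ d ∈ Set.center R ∧ r * d = 0 ∧ d * r = 0) := by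
  constructor
  · intro r s hs hrs
    obtain ⟨c, hc, hne, hcen⟩ := hce s hs
    refine ⟨s * c, hne, hcen, ?_, ?_⟩
    · rw [← mul_assoc, hrs, zero_mul]
    · rw [← (Semigroup.mem_center_iff.mp hcen) r, ← mul_assoc, hrs, zero_mul]
  · intro r s hs hsr
    obtain ⟨c, hc, hne, hcen⟩ := hce s hs
    have hdr : (s * c) * r = 0 := by
      rw [mul_assoc, ← (Semigroup.mem_center_iff.mp hc) r, ← mul_assoc, hsr, zero_mul]
    exact ⟨s * c, hne, hcen, by rw [(Semigroup.mem_center_iff.mp hcen) r, hdr], hdr⟩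
end

section
/- If R is a right Noetherian, centrally essential, subdirectly indecomposable ring, then R is a right Artinian local ring. -/
open MulOpposite



namespace CE

variable {R : Type*} [Ring R]

/-- Left multiplication as a right-module endomorphism. -/
def lmul (a : R) : R →ₗ[Rᵐᵒᵖ] R where
  toFun x := a * x
  map_add' := mul_add a
  map_smul' c x := by
    simp only [MulOpposite.smul_eq_mul_unop, RingHom.id_apply, mul_assoc]

@[simp] lemma lmul_apply (a x : R) : lmul a x = a * x := rfl

lemma exists_z (hce : IsCentrallyEssential R) (hsi : IsSubdirectlyIndecomposable R) :
    ∃ z : R, z ≠ 0 ∧ (∀ g : R, g * z = z * g) ∧ ∀ a : R, a ≠ 0 → ∃ u, z = a * u := by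
  classical
  set J := sInf {I : TwoSidedIdeal R | I ≠ ⊥} with hJ
  have hJne : ∃ h ∈ J, h ≠ (0 : R) := by
    by_contra hc
    push_neg at hc
    exact hsi (SetLike.ext fun x =>
      ⟨fun hx => (TwoSidedIdeal.mem_bot _).mpr (hc x hx),
       fun hx => ((TwoSidedIdeal.mem_bot _).mp hx) ▸ J.zero_mem⟩)
  obtain ⟨h, hhJ, hh0⟩ := hJne
  obtain ⟨c, hc_center, hne, hcen⟩ := hce h hh0
  refine ⟨h * c, hne, fun g => ((Set.mem_center_iff.mp hcen).comm g).symm, ?_⟩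
  intro a ha
  obtain ⟨d', hd'c, hd0, hdc⟩ := hce a ha
  have hdcomm : ∀ g : R, g * (a * d') = (a * d') * g :=
    fun g => ((Set.mem_center_iff.mp hdc).comm g).symm
  set d := a * d' with hd
  let Id : TwoSidedIdeal R := TwoSidedIdeal.mk' {x | ∃ r, x = d * r}
    ⟨0, (mul_zero d).symm⟩
    (fun {x y} hx hy => by
      obtain ⟨r, rfl⟩ := hx; obtain ⟨t, rfl⟩ := hy
      exact ⟨r + t, (mul_add d r t).symm⟩)
    (fun {x} hx => by
      obtain ⟨r, rfl⟩ := hx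
      exact ⟨-r, (mul_neg d r).symm⟩)
    (fun {x y} hy => by
      obtain ⟨r, rfl⟩ := hy
      exact ⟨x * r, by rw [← mul_assoc, hdcomm x, mul_assoc]⟩)
    (fun {x y} hx => by
      obtain ⟨r, rfl⟩ := hx
      exact ⟨r * y, by rw [mul_assoc]⟩)
  have hIdne : Id ≠ ⊥ := by
    intro hbot
    have hdId : d ∈ Id := (TwoSidedIdeal.mem_mk' _ _ _ _ _ _ _).mpr ⟨1, (mul_one d).symm⟩
    rw [hbot, TwoSidedIdeal.mem_bot] at hdId
    exact hd0 hdId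
  have hzId : h * c ∈ Id := by
    have h1 : h ∈ Id := ((TwoSidedIdeal.mem_sInf _).mp hhJ) Id hIdne
    exact Id.mul_mem_right _ _ h1
  obtain ⟨r, hr⟩ := (TwoSidedIdeal.mem_mk' _ _ _ _ _ _ _).mp hzId
  exact ⟨d' * r, by rw [hr, hd, mul_assoc]⟩

variable {z : R}

lemma nil [IsNoetherian Rᵐᵒᵖ R] (hz0 : z ≠ 0)
    (hzc : ∀ g : R, g * z = z * g)
    (hzmem : ∀ a : R, a ≠ 0 → ∃ u, z = a * u)
    {m : R} (hm : z * m = 0) : IsNilpotent m := by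
  by_contra hnil
  have hpow : ∀ k, m ^ k ≠ 0 := fun k hk => hnil ⟨k, hk⟩
  have hzmk : ∀ k : ℕ, z * m ^ (k + 1) = 0 := by
    intro k
    induction k with
    | zero => simpa using hm
    | succ k ih => rw [pow_succ, ← mul_assoc, ih, zero_mul]
  set f : ℕ →o Submodule Rᵐᵒᵖ R :=
    ⟨fun k => LinearMap.ker (lmul (m ^ k)), by
      apply monotone_nat_of_le_succ
      intro k x hx
      rw [LinearMap.mem_ker] at hx ⊢
      rw [lmul_apply] at hx ⊢
      rw [pow_succ', mul_assoc, hx, mul_zero]⟩ with hf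
  obtain ⟨n₀, hst⟩ := monotone_stabilizes_iff_noetherian.mpr inferInstance f
  set n := n₀ + 1 with hn
  obtain ⟨u, hu⟩ := hzmem (m ^ n) (hpow n)
  have h1 : m ^ n * z = 0 := by rw [hzc (m ^ n)]; exact hzmk n₀
  have h2 : m ^ (n + n) * u = 0 := by
    rw [pow_add, mul_assoc, ← hu]; exact h1
  have hmem : u ∈ f (n + n) := by
    rw [hf]; exact LinearMap.mem_ker.mpr h2
  have he : f (n + n) = f n := ((hst (n + n) (by omega))).symm.trans (hst n (by omega))
  rw [he, hf] at hmem
  have h3 : m ^ n * u = 0 := LinearMap.mem_ker.mp hmem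
  exact hz0 (by rw [hu, h3])

lemma rinv [IsNoetherian Rᵐᵒᵖ R] (hz0 : z ≠ 0)
    (hzc : ∀ g : R, g * z = z * g)
    (hzmem : ∀ a : R, a ≠ 0 → ∃ u, z = a * u) :
    ∀ x : R, z * x ≠ 0 → ∃ y, x * y = 1 := by
  intro x hx
  obtain ⟨u, hu⟩ := hzmem (z * x) hx
  have hb : z * (1 - x * u) = 0 := by
    rw [mul_sub, mul_one, ← mul_assoc, ← hu, sub_self]
  have hunit : IsUnit (x * u) := by
    have := (nil hz0 hzc hzmem hb).isUnit_one_sub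
    rwa [sub_sub_cancel] at this
  obtain ⟨v, hv⟩ := hunit
  refine ⟨u * ↑v⁻¹, ?_⟩
  rw [← mul_assoc, ← hv]
  exact v.mul_inv

lemma unit [IsNoetherian Rᵐᵒᵖ R] [Nontrivial R] (hz0 : z ≠ 0)
    (hzc : ∀ g : R, g * z = z * g)
    (hzmem : ∀ a : R, a ≠ 0 → ∃ u, z = a * u) :
    ∀ x : R, z * x ≠ 0 → IsUnit x := by
  intro x hx
  obtain ⟨y, hy⟩ := rinv hz0 hzc hzmem x hx
  have hzy : z * y ≠ 0 := by
    intro h0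
    obtain ⟨k, hk⟩ := nil hz0 hzc hzmem h0
    have hpow : ∀ j : ℕ, x ^ j * y ^ j = 1 := by
      intro j
      induction j with
      | zero => simp
      | succ j ih =>
        rw [pow_succ, pow_succ', mul_assoc, ← mul_assoc x y, hy, one_mul, ih]
    have := hpow k
    rw [hk, mul_zero] at this
    exact one_ne_zero this.symm
  obtain ⟨w, hw⟩ := rinv hz0 hzc hzmem y hzy
  have hxw : x = w := by
    calc x = x * (y * w) := by rw [hw, mul_one]
    _ = (x * y) * w := (mul_assoc _ _ _).symm
    _ = w := by rw [hy, one_mul]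
  exact ⟨⟨x, y, hy, by rw [hxw]; exact hw⟩, rfl⟩

lemma nonunit (hz0 : z ≠ 0) {x : R} (h : z * x = 0) : ¬IsUnit x := by
  rintro ⟨v, rfl⟩
  apply hz0
  calc z = z * (↑v * ↑v⁻¹) := by rw [Units.mul_inv, mul_one]
  _ = (z * ↑v) * ↑v⁻¹ := (mul_assoc _ _ _).symm
  _ = 0 := by rw [h, zero_mul]

end CE

namespace CE

variable {R : Type*} [Ring R]

/-- The submodule of `x ∈ R` annihilating all products of `j` elements of the
annihilator of the central element `z`. -/
def L (z : R) (hzc : ∀ g : R, g * z = z * g) (j : ℕ) : Submodule Rᵐᵒᵖ R where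
  carrier := {x | ∀ l : List R, (∀ y ∈ l, z * y = 0) → l.length = j → x * l.prod = 0}
  add_mem' := by
    intro x y hx hy l hl hlen
    rw [add_mul, hx l hl hlen, hy l hl hlen, add_zero]
  zero_mem' := fun l _ _ => zero_mul _
  smul_mem' := by
    intro c x hx l hl hlen
    rcases l with _ | ⟨y, t⟩
    · have hx0 : x = 0 := by simpa using hx [] (by simp) hlen
      show (c • x) * List.prod [] = 0
      rw [hx0, smul_zero, zero_mul]
    · have hm : z * (unop c * y) = 0 := by
        calc z * (unop c * y) = (unop c * y) * z := (hzc (unop c * y)).symm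
        _ = unop c * (y * z) := mul_assoc _ _ _
        _ = unop c * (z * y) := by rw [hzc y]
        _ = 0 := by rw [hl y (by simp), mul_zero]
      have heq : (c • x) * (y :: t).prod = x * ((unop c * y) :: t).prod := by
        show (x * unop c) * (y * t.prod) = x * ((unop c * y) * t.prod)
        rw [mul_assoc, ← mul_assoc (unop c)]
      rw [heq]
      refine hx ((unop c * y) :: t) ?_ (by simpa using hlen)
      intro y' hy'
      rcases List.mem_cons.mp hy' with rfl | h
      · exact hm
      · exact hl y' (List.mem_cons_of_mem _ h)

lemma mem_L {z : R} {hzc : ∀ g : R, g * z = z * g} {j : ℕ} {x : R} :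
    x ∈ L z hzc j ↔
      ∀ l : List R, (∀ y ∈ l, z * y = 0) → l.length = j → x * l.prod = 0 :=
  Iff.rfl

lemma step {V : Type*} [AddCommGroup V] [Module Rᵐᵒᵖ V] (W W' : Submodule Rᵐᵒᵖ V)
    (hle : W ≤ W') (h1 : IsArtinian Rᵐᵒᵖ (V ⧸ W'))
    (h2 : IsArtinian Rᵐᵒᵖ ↥(Submodule.map W.mkQ W')) : IsArtinian Rᵐᵒᵖ (V ⧸ W) := by
  haveI := h1
  exact (isArtinian_iff_submodule_quotient (Submodule.map W.mkQ W')).mpr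
    ⟨h2, isArtinian_of_linearEquiv (Submodule.quotientQuotientEquivQuotient W W' hle).symm⟩

lemma cyc {z : R} (hu : ∀ x : R, z * x ≠ 0 → IsUnit x)
    (K : Submodule Rᵐᵒᵖ Rᵐᵒᵖ) (hK : ∀ m : R, z * m = 0 → op m ∈ K) :
    IsArtinian Rᵐᵒᵖ (Rᵐᵒᵖ ⧸ K) := by
  have hdich : ∀ T : Submodule Rᵐᵒᵖ (Rᵐᵒᵖ ⧸ K), T = ⊥ ∨ T = ⊤ := by
    intro T
    by_cases hT : T = ⊥
    · exact Or.inl hT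
    right
    obtain ⟨q, hqT, hq0⟩ := T.ne_bot_iff.mp hT
    obtain ⟨s, rfl⟩ := Submodule.Quotient.mk_surjective K q
    have hsK : s ∉ K := fun h => hq0 ((Submodule.Quotient.mk_eq_zero K).mpr h)
    have hzs : z * s.unop ≠ 0 := by
      intro h0
      exact hsK (by simpa using hK s.unop h0)
    obtain ⟨v, hv⟩ := hu s.unop hzs
    have hvs : s = op (↑v : R) := by rw [hv, op_unop]
    have hop : op (↑v⁻¹ : R) * s = 1 := by
      rw [hvs, ← op_mul, Units.mul_inv, op_one]
    rw [eq_top_iff]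
    rintro q' -
    obtain ⟨t, rfl⟩ := Submodule.Quotient.mk_surjective K q'
    have h2 : (t * op (↑v⁻¹ : R)) • (Submodule.Quotient.mk s : Rᵐᵒᵖ ⧸ K)
        = Submodule.Quotient.mk t := by
      rw [← Submodule.Quotient.mk_smul]
      congr 1
      rw [smul_eq_mul, mul_assoc, hop, mul_one]
    rw [← h2]
    exact T.smul_mem _ hqT
  have hacc_bot : Acc (· < ·) (⊥ : Submodule Rᵐᵒᵖ (Rᵐᵒᵖ ⧸ K)) :=
    Acc.intro _ fun y hy => absurd hy (not_lt_bot)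
  refine ⟨⟨fun T => ?_⟩⟩
  rcases hdich T with rfl | rfl
  · exact hacc_bot
  · refine Acc.intro _ fun y hy => ?_
    rcases hdich y with rfl | rfl
    · exact hacc_bot
    · exact absurd hy (lt_irrefl _)

lemma art {z : R} (hu : ∀ x : R, z * x ≠ 0 → IsUnit x)
    {V : Type*} [AddCommGroup V] [Module Rᵐᵒᵖ V] [IsNoetherian Rᵐᵒᵖ V]
    (hkill : ∀ (v : V) (m : R), z * m = 0 → op m • v = 0) : IsArtinian Rᵐᵒᵖ V := by
  suffices h : ∀ W : Submodule Rᵐᵒᵖ V, IsArtinian Rᵐᵒᵖ (V ⧸ W) by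
    haveI := h ⊥
    exact isArtinian_of_linearEquiv (Submodule.quotEquivOfEqBot ⊥ rfl)
  have wf : WellFounded ((· > ·) : Submodule Rᵐᵒᵖ V → Submodule Rᵐᵒᵖ V → Prop) :=
    (isNoetherian_iff'.mp inferInstance).wf
  intro W
  refine wf.induction (C := fun W => IsArtinian Rᵐᵒᵖ (V ⧸ W)) W ?_
  intro W ih
  by_cases hW : W = ⊤
  · subst hW
    haveI : Subsingleton (V ⧸ (⊤ : Submodule Rᵐᵒᵖ V)) :=
      Submodule.Quotient.subsingleton_iff.mpr rfl
    haveI : Finite (V ⧸ (⊤ : Submodule Rᵐᵒᵖ V)) := Finite.of_subsingleton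
    exact isArtinian_of_finite
  · obtain ⟨v, hv⟩ : ∃ v, v ∉ W := by
      by_contra h
      push_neg at h
      exact hW (eq_top_iff.mpr fun x _ => h x)
    set W' := W ⊔ Submodule.span Rᵐᵒᵖ {v} with hW'
    have hvW' : v ∈ W' := Submodule.mem_sup_right (Submodule.mem_span_singleton_self v)
    have hlt : W < W' := lt_of_le_of_ne le_sup_left (fun he => hv (by rw [he]; exact hvW'))
    have h1 : IsArtinian Rᵐᵒᵖ (V ⧸ W') := ih W' hlt
    set u₀ : V ⧸ W := W.mkQ v with hu₀
    set f : Rᵐᵒᵖ →ₗ[Rᵐᵒᵖ] V ⧸ W := LinearMap.toSpanSingleton Rᵐᵒᵖ (V ⧸ W) u₀ with hfdef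
    have hker : ∀ m : R, z * m = 0 → op m ∈ LinearMap.ker f := by
      intro m hm
      rw [LinearMap.mem_ker]
      show op m • u₀ = 0
      rw [hu₀, Submodule.mkQ_apply, ← Submodule.Quotient.mk_smul, hkill v m hm,
        Submodule.Quotient.mk_zero]
    have hartq := cyc hu (LinearMap.ker f) hker
    have hrange : LinearMap.range f = Submodule.map W.mkQ W' := by
      rw [← LinearMap.span_singleton_eq_range, hW', Submodule.map_sup, Submodule.map_span,
        Set.image_singleton]
      have hbot : Submodule.map W.mkQ W = ⊥ := by
        rw [eq_bot_iff]
        rintro x ⟨w, hw, rfl⟩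
        simpa [Submodule.mem_bot] using (Submodule.Quotient.mk_eq_zero W).mpr hw
      rw [hbot, bot_sup_eq]
    have h2 : IsArtinian Rᵐᵒᵖ ↥(Submodule.map W.mkQ W') := by
      haveI := hartq
      exact isArtinian_of_linearEquiv
        ((f.quotKerEquivRange).trans (LinearEquiv.ofEq _ _ hrange))
    exact step W W' le_sup_left h1 h2

end CE

namespace CE

variable {R : Type*} [Ring R]

lemma chain [IsNoetherian Rᵐᵒᵖ R] {z : R} (hzc : ∀ g : R, g * z = z * g)
    (hu : ∀ x : R, z * x ≠ 0 → IsUnit x)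
    {n : ℕ} (hn : ∀ l : List R, (∀ y ∈ l, z * y = 0) → l.length = n → l.prod = 0) :
    IsArtinian Rᵐᵒᵖ R := by
  have hL0 : L z hzc 0 = ⊥ := by
    rw [eq_bot_iff]
    intro x hx
    have := hx [] (by simp) rfl
    simpa [Submodule.mem_bot] using this
  have hLn : L z hzc n = ⊤ := by
    rw [eq_top_iff]
    intro x _
    intro l hl hlen
    rw [hn l hl hlen, mul_zero]
  have hmono : ∀ k, L z hzc k ≤ L z hzc (k + 1) := by
    intro k x hx l hl hlen
    rcases List.eq_nil_or_concat l with rfl | ⟨l', y, rfl⟩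
    · simp at hlen
    · have hlen' : l'.length = k := by simpa using hlen
      rw [List.concat_eq_append, List.prod_append, List.prod_cons, List.prod_nil, mul_one,
        ← mul_assoc, hx l' (fun y' hy' => hl y' (by simp [hy'])) hlen', zero_mul]
  have hstep : ∀ k, IsArtinian Rᵐᵒᵖ (R ⧸ L z hzc (k + 1)) →
      IsArtinian Rᵐᵒᵖ (R ⧸ L z hzc k) := by
    intro k hk
    refine step _ _ (hmono k) hk ?_
    refine art hu ?_
    rintro ⟨q, hq⟩ m hm
    obtain ⟨x, hxL, rfl⟩ := hq
    refine Subtype.ext ?_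
    show op m • ((L z hzc k).mkQ x) = (0 : R ⧸ L z hzc k)
    rw [Submodule.mkQ_apply, ← Submodule.Quotient.mk_smul, Submodule.Quotient.mk_eq_zero]
    show x * m ∈ L z hzc k
    intro l hl hlen
    rw [mul_assoc]
    refine hxL (m :: l) ?_ (by simp [hlen])
    intro y hy
    rcases List.mem_cons.mp hy with rfl | h
    · exact hm
    · exact hl y h
  have hall : ∀ j : ℕ, IsArtinian Rᵐᵒᵖ (R ⧸ L z hzc (n - j)) := by
    intro j
    induction j with
    | zero =>
      rw [Nat.sub_zero, hLn]
      haveI : Subsingleton (R ⧸ (⊤ : Submodule Rᵐᵒᵖ R)) :=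
        Submodule.Quotient.subsingleton_iff.mpr rfl
      haveI : Finite (R ⧸ (⊤ : Submodule Rᵐᵒᵖ R)) := Finite.of_subsingleton
      exact isArtinian_of_finite
    | succ j ihj =>
      by_cases hj : j < n
      · have he : n - (j + 1) + 1 = n - j := by omega
        have := hstep (n - (j + 1))
        rw [he] at this
        exact this ihj
      · have he : n - (j + 1) = n - j := by omega
        rw [he]
        exact ihj
  have hfin := hall n
  rw [Nat.sub_self, hL0] at hfin
  haveI := hfin
  exact isArtinian_of_linearEquiv (Submodule.quotEquivOfEqBot (⊥ : Submodule Rᵐᵒᵖ R) rfl)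

/-- The right annihilator of `a` modulo `N`. -/
def rN (N : Submodule Rᵐᵒᵖ R) (a : R) : Submodule Rᵐᵒᵖ R where
  carrier := {r | a * r ∈ N}
  add_mem' := by
    intro x y hx hy
    show a * (x + y) ∈ N
    rw [mul_add]
    exact N.add_mem hx hy
  zero_mem' := by
    show a * 0 ∈ N
    rw [mul_zero]
    exact N.zero_mem
  smul_mem' := by
    intro c x hx
    show a * (c • x) ∈ N
    have h : a * (c • x) = c • (a * x) := by
      show a * (x * unop c) = (a * x) * unop c
      rw [mul_assoc]
    rw [h]
    exact N.smul_mem c hx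

lemma mem_rN {N : Submodule Rᵐᵒᵖ R} {a r : R} : r ∈ rN N a ↔ a * r ∈ N := Iff.rfl

lemma levitzki [IsNoetherian Rᵐᵒᵖ R] {z : R}
    (hzc : ∀ g : R, g * z = z * g)
    (hnl : ∀ m : R, z * m = 0 → IsNilpotent m) :
    ∃ n, ∀ l : List R, (∀ y ∈ l, z * y = 0) → l.length = n → l.prod = 0 := by
  classical
  set TS : Submodule Rᵐᵒᵖ R → Prop := fun N => ∀ (r : R), ∀ x ∈ N, r * x ∈ N with hTSdef
  set NB : Submodule Rᵐᵒᵖ R → ℕ → Prop :=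
    fun N s => ∀ l : List R, (∀ y ∈ l, y ∈ N) → l.length = s → l.prod = 0 with hNBdef
  set S : Set (Submodule Rᵐᵒᵖ R) := {N | TS N ∧ ∃ s, 0 < s ∧ NB N s} with hSdef
  have hbotS : (⊥ : Submodule Rᵐᵒᵖ R) ∈ S := by
    refine ⟨fun r x hx => ?_, 1, one_pos, ?_⟩
    · rw [Submodule.mem_bot] at hx ⊢
      rw [hx, mul_zero]
    · intro l hl hlen
      obtain ⟨y, rfl⟩ := List.length_eq_one_iff.mp hlen
      have hy : y ∈ (⊥ : Submodule Rᵐᵒᵖ R) := hl y (by simp)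
      rw [Submodule.mem_bot] at hy
      simp [hy]
  obtain ⟨N, hNS, hNmax⟩ :=
    set_has_maximal_iff_noetherian.mpr (inferInstance : IsNoetherian Rᵐᵒᵖ R) S ⟨⊥, hbotS⟩
  obtain ⟨hTSN, s, hs0, hNBs⟩ := hNS
  have hsub : ∀ m : R, z * m = 0 → m ∈ N := by
    by_contra hcon
    push_neg at hcon
    obtain ⟨m₀, hm₀z, hm₀N⟩ := hcon
    set F : Set (Submodule Rᵐᵒᵖ R) := {P | ∃ a : R, z * a = 0 ∧ a ∉ N ∧ P = rN N a} with hFdef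
    obtain ⟨P₀, hP₀F, hP₀max⟩ :=
      set_has_maximal_iff_noetherian.mpr (inferInstance : IsNoetherian Rᵐᵒᵖ R) F
        ⟨_, ⟨m₀, hm₀z, hm₀N, rfl⟩⟩
    obtain ⟨a, haz, haN, rfl⟩ := hP₀F
    have key : ∀ x : R, a * (x * a) ∈ N := by
      intro x
      have hwz : z * (x * a) = 0 := by
        calc z * (x * a) = (x * a) * z := (hzc (x * a)).symm
        _ = x * (a * z) := mul_assoc _ _ _
        _ = x * (z * a) := by rw [hzc a]
        _ = 0 := by rw [haz, mul_zero]
      obtain ⟨t, ht⟩ := hnl (x * a) hwz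
      have hex : ∃ j, a * (x * a) ^ j ∈ N := ⟨t, by rw [ht, mul_zero]; exact N.zero_mem⟩
      have hk₀ : a * (x * a) ^ (Nat.find hex) ∈ N := Nat.find_spec hex
      have hk₀0 : Nat.find hex ≠ 0 := by
        intro h0
        rw [h0, pow_zero, mul_one] at hk₀
        exact haN hk₀
      set k := Nat.find hex - 1 with hkdef
      have hkk : k + 1 = Nat.find hex := by omega
      have hkN : a * (x * a) ^ k ∉ N := Nat.find_min hex (by omega)
      have hcz : z * (a * (x * a) ^ k) = 0 := by
        rw [← mul_assoc, haz, zero_mul]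
      have hcomm : ∀ j : ℕ, a * (x * a) ^ j = (a * x) ^ j * a := by
        intro j
        induction j with
        | zero => simp
        | succ j ih =>
          rw [pow_succ, ← mul_assoc, ih, pow_succ]
          simp [mul_assoc]
      have hle : rN N a ≤ rN N (a * (x * a) ^ k) := by
        intro r hr
        rw [mem_rN] at hr ⊢
        have heq : (a * (x * a) ^ k) * r = (a * x) ^ k * (a * r) := by
          rw [hcomm k, mul_assoc]
        rw [heq]
        exact hTSN _ _ hr
      have hcF : rN N (a * (x * a) ^ k) ∈ F := ⟨_, hcz, hkN, rfl⟩
      have heq : rN N (a * (x * a) ^ k) = rN N a := by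
        by_contra hne
        exact hP₀max _ hcF (lt_of_le_of_ne hle (Ne.symm hne))
      have hwm : (x * a) ∈ rN N (a * (x * a) ^ k) := by
        rw [mem_rN, mul_assoc, ← pow_succ, hkk]
        exact hk₀
      rw [heq, mem_rN] at hwm
      exact hwm
    set S₀ : Set R := {y | ∃ r : R, y = r * a} with hS₀def
    have hleft : ∀ (r : R), ∀ w ∈ Submodule.span Rᵐᵒᵖ S₀, r * w ∈ Submodule.span Rᵐᵒᵖ S₀ := by
      intro r w hw
      induction hw using Submodule.span_induction with
      | mem y hy =>
        obtain ⟨s', rfl⟩ := hy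
        exact Submodule.subset_span ⟨r * s', (mul_assoc _ _ _).symm⟩
      | zero =>
        rw [mul_zero]
        exact Submodule.zero_mem _
      | add x y hx hy ihx ihy =>
        rw [mul_add]
        exact Submodule.add_mem _ ihx ihy
      | smul c x hx ihx =>
        have h : r * (c • x) = c • (r * x) := by
          show r * (x * unop c) = (r * x) * unop c
          rw [mul_assoc]
        rw [h]
        exact Submodule.smul_mem _ c ihx
    have hTSN' : TS (N ⊔ Submodule.span Rᵐᵒᵖ S₀) := by
      intro r x hx
      obtain ⟨n₁, hn₁, w₁, hw₁, rfl⟩ := Submodule.mem_sup.mp hx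
      rw [mul_add]
      exact Submodule.add_mem _ (Submodule.mem_sup_left (hTSN r _ hn₁))
        (Submodule.mem_sup_right (hleft r _ hw₁))
    have sub1 : ∀ (s' : R), ∀ w' ∈ Submodule.span Rᵐᵒᵖ S₀, (s' * a) * w' ∈ N := by
      intro s' w' hw'
      induction hw' using Submodule.span_induction with
      | mem y hy =>
        obtain ⟨t, rfl⟩ := hy
        have h : (s' * a) * (t * a) = s' * (a * (t * a)) := by simp [mul_assoc]
        rw [h]
        exact hTSN s' _ (key t)
      | zero =>
        rw [mul_zero]
        exact N.zero_mem
      | add x y hx hy ihx ihy =>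
        rw [mul_add]
        exact N.add_mem ihx ihy
      | smul c x hx ihx =>
        have h : (s' * a) * (c • x) = c • ((s' * a) * x) := by
          simp only [MulOpposite.smul_eq_mul_unop, mul_assoc]
        rw [h]
        exact N.smul_mem c ihx
    have sub2 : ∀ w ∈ Submodule.span Rᵐᵒᵖ S₀, ∀ w' ∈ Submodule.span Rᵐᵒᵖ S₀, w * w' ∈ N := by
      intro w hw
      induction hw using Submodule.span_induction with
      | mem y hy =>
        obtain ⟨s', rfl⟩ := hy
        exact fun w' hw' => sub1 s' w' hw'
      | zero =>
        intro w' hw'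
        rw [zero_mul]
        exact N.zero_mem
      | add x y hx hy ihx ihy =>
        intro w' hw'
        rw [add_mul]
        exact N.add_mem (ihx w' hw') (ihy w' hw')
      | smul c x hx ihx =>
        intro w' hw'
        have h1 : unop c * w' ∈ Submodule.span Rᵐᵒᵖ S₀ := hleft _ _ hw'
        have h2 : (c • x) * w' = x * (unop c * w') := by
          show (x * unop c) * w' = x * (unop c * w')
          rw [mul_assoc]
        rw [h2]
        exact ihx _ h1
    have hpair : ∀ u ∈ N ⊔ Submodule.span Rᵐᵒᵖ S₀, ∀ v ∈ N ⊔ Submodule.span Rᵐᵒᵖ S₀,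
        u * v ∈ N := by
      intro u hu v hv
      obtain ⟨n₁, hn₁, w₁, hw₁, rfl⟩ := Submodule.mem_sup.mp hu
      obtain ⟨n₂, hn₂, w₂, hw₂, rfl⟩ := Submodule.mem_sup.mp hv
      rw [add_mul, mul_add, mul_add]
      refine N.add_mem (N.add_mem ?_ ?_) (N.add_mem ?_ ?_)
      · show n₁ * n₂ ∈ N
        have h : n₁ * n₂ = (op n₂) • n₁ := rfl
        rw [h]
        exact N.smul_mem _ hn₁
      · show n₁ * w₂ ∈ N
        have h : n₁ * w₂ = (op w₂) • n₁ := rfl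
        rw [h]
        exact N.smul_mem _ hn₁
      · exact hTSN _ _ hn₂
      · exact sub2 _ hw₁ _ hw₂
    have hchunk : ∀ (s' : ℕ) (l : List R),
        (∀ x ∈ l, x ∈ N ⊔ Submodule.span Rᵐᵒᵖ S₀) → l.length = 2 * s' →
        ∃ l' : List R, l'.length = s' ∧ (∀ x ∈ l', x ∈ N) ∧ l'.prod = l.prod := by
      intro s'
      induction s' with
      | zero =>
        intro l hl hlen
        obtain rfl := List.length_eq_zero_iff.mp (by simpa using hlen)
        exact ⟨[], rfl, by simp, rfl⟩
      | succ s' ih =>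
        intro l hl hlen
        rcases l with _ | ⟨u, l₁⟩
        · simp only [List.length_nil] at hlen; omega
        rcases l₁ with _ | ⟨v, l₂⟩
        · simp only [List.length_cons, List.length_nil] at hlen; omega
        obtain ⟨l', hl'len, hl'mem, hl'prod⟩ :=
          ih l₂ (fun x hx => hl x (by simp [hx])) (by simp at hlen ⊢; omega)
        refine ⟨(u * v) :: l', by simp [hl'len], ?_, ?_⟩
        · intro x hx
          rcases List.mem_cons.mp hx with rfl | h
          · exact hpair u (hl u (by simp)) v (hl v (by simp))
          · exact hl'mem x h
        · rw [List.prod_cons, hl'prod, List.prod_cons, List.prod_cons, mul_assoc]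
    have hN'S : (N ⊔ Submodule.span Rᵐᵒᵖ S₀) ∈ S := by
      refine ⟨hTSN', 2 * s, by omega, ?_⟩
      intro l hl hlen
      obtain ⟨l', hlen', hmem', hprod'⟩ := hchunk s l hl hlen
      rw [← hprod']
      exact hNBs l' hmem' hlen'
    have haN' : a ∈ N ⊔ Submodule.span Rᵐᵒᵖ S₀ :=
      Submodule.mem_sup_right (Submodule.subset_span ⟨1, (one_mul a).symm⟩)
    have hlt : N < N ⊔ Submodule.span Rᵐᵒᵖ S₀ :=
      lt_of_le_of_ne le_sup_left (fun he => haN (by rw [he]; exact haN'))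
    exact hNmax _ hN'S hlt
  exact ⟨s, fun l hl hlen => hNBs l (fun y hy => hsub y (hl y hy)) hlen⟩

end CE

/-- A right Noetherian, centrally essential, subdirectly indecomposable ring is a right
Artinian local ring. -/
theorem centrallyEssential_subdirectlyIndecomposable_rightArtinian_local
    (R : Type*) [Ring R] [Nontrivial R]
    [IsNoetherian Rᵐᵒᵖ R]
    (hce : IsCentrallyEssential R)
    (hsi : IsSubdirectlyIndecomposable R) :
    IsArtinian Rᵐᵒᵖ R ∧ IsLocalRing R := by
  obtain ⟨z, hz0, hzc, hzmem⟩ := CE.exists_z hce hsi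
  have hnl : ∀ m : R, z * m = 0 → IsNilpotent m := fun m hm => CE.nil hz0 hzc hzmem hm
  have hu : ∀ x : R, z * x ≠ 0 → IsUnit x := CE.unit hz0 hzc hzmem
  constructor
  · obtain ⟨n, hn⟩ := CE.levitzki hzc hnl
    exact CE.chain hzc hu hn
  · refine ⟨?_⟩
    intro a b hab
    by_contra hcon
    push_neg at hcon
    obtain ⟨ha, hb⟩ := hcon
    have hza : z * a = 0 := by
      by_contra h
      exact ha (hu a h)
    have hzb : z * b = 0 := by
      by_contra h
      exact hb (hu b h)
    apply hz0
    calc z = z * (a + b) := by rw [hab, mul_one]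
    _ = 0 := by rw [mul_add, hza, hzb, add_zero]
end

section
/- If R is a right Noetherian, centrally essential, subdirectly indecomposable ring, then the factor ring R/J(R) is commutative. -/
section Aux

variable {R : Type*} [Ring R]

/-- Shifting a central element across a product. -/
private lemma central_shift {z : R} (hz : ∀ g : R, g * z = z * g) (u v : R) :
    u * (z * v) = z * (u * v) := by
  rw [← mul_assoc, hz u, mul_assoc]

/-- The two-sided ideal of right multiples of a central element. -/
private def cIdeal (γ : R) (hγ : ∀ g : R, g * γ = γ * g) : TwoSidedIdeal R :=
  TwoSidedIdeal.mk' {x | ∃ r, x = γ * r}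
    ⟨0, by rw [mul_zero]⟩
    (fun {x y} hx hy => by
      obtain ⟨r, rfl⟩ := hx; obtain ⟨t, rfl⟩ := hy
      exact ⟨r + t, by rw [mul_add]⟩)
    (fun {x} hx => by
      obtain ⟨r, rfl⟩ := hx
      exact ⟨-r, by rw [mul_neg]⟩)
    (fun {x y} hy => by
      obtain ⟨r, rfl⟩ := hy
      exact ⟨x * r, by rw [← mul_assoc, hγ x, mul_assoc]⟩)
    (fun {x y} hx => by
      obtain ⟨r, rfl⟩ := hx
      exact ⟨r * y, by rw [mul_assoc]⟩)

private lemma mem_cIdeal_iff {γ : R} (hγ : ∀ g : R, g * γ = γ * g) (x : R) :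
    x ∈ cIdeal γ hγ ↔ ∃ r, x = γ * r := by
  simp [cIdeal, TwoSidedIdeal.mem_mk']

private lemma cIdeal_ne_bot {γ : R} (hγ : ∀ g : R, g * γ = γ * g) (h0 : γ ≠ 0) :
    cIdeal γ hγ ≠ ⊥ := by
  intro hbot
  apply h0
  have hγmem : γ ∈ cIdeal γ hγ := (mem_cIdeal_iff hγ γ).mpr ⟨1, (mul_one γ).symm⟩
  rw [hbot] at hγmem
  exact hγmem

end Aux

/-- If `R` is a right Noetherian, centrally essential, subdirectly indecomposable ring,
then the factor ring `R/J(R)` is commutative, i.e. all commutators lie in the Jacobson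
radical. -/
theorem centrallyEssential_subdirectlyIndecomposable_quotientJacobson_commutative
    (R : Type*) [Ring R] [Nontrivial R]
    [IsNoetherian Rᵐᵒᵖ R]
    (hce : IsCentrallyEssential R)
    (hsi : IsSubdirectlyIndecomposable R) :
    ∀ a b : R, a * b - b * a ∈ Ideal.jacobson (⊥ : Ideal R) := by
  classical
  -- ## Step 0: a nonzero central element `h` of the heart
  obtain ⟨h, hh0, hhC, hmemH⟩ :
      ∃ h : R, h ≠ 0 ∧ h ∈ Set.center R ∧ h ∈ sInf {I : TwoSidedIdeal R | I ≠ ⊥} := by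
    obtain ⟨a0, ha0H, ha0⟩ : ∃ x, x ∈ sInf {I : TwoSidedIdeal R | I ≠ ⊥} ∧ x ≠ 0 := by
      by_contra hcon
      push_neg at hcon
      apply hsi
      refine SetLike.ext fun x => ?_
      constructor
      · intro hx
        exact hcon x hx
      · intro hx
        have hx0 : x = 0 := hx
        exact hx0 ▸ TwoSidedIdeal.zero_mem _
    obtain ⟨c0, _hc0C, hh0, hhC⟩ := hce a0 ha0
    exact ⟨a0 * c0, hh0, hhC, TwoSidedIdeal.mul_mem_right _ _ _ ha0H⟩
  have hcen : ∀ g : R, g * h = h * g := fun g => Semigroup.mem_center_iff.mp hhC g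
  -- `h` belongs to every nonzero two-sided ideal; in particular, for each nonzero
  -- central `γ`, `h` is a right multiple of `γ`.
  have hheart : ∀ γ : R, γ ≠ 0 → ∀ hγc : (∀ g : R, g * γ = γ * g), ∃ s, h = γ * s := by
    intro γ hγ0 hγc
    have h2 : sInf {I : TwoSidedIdeal R | I ≠ ⊥} ≤ cIdeal γ hγc :=
      sInf_le (cIdeal_ne_bot hγc hγ0)
    exact (mem_cIdeal_iff hγc h).mp (h2 hmemH)
  -- ## Step 1 (uses Noetherian): anything annihilated by `h` is nilpotent
  have hnil : ∀ x : R, h * x = 0 → IsNilpotent x := by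
    intro x hx
    by_contra hcon
    have hxn : ∀ n : ℕ, x ^ n ≠ 0 := fun n hn => hcon ⟨n, hn⟩
    -- chain of right annihilators of powers of x
    let f : ℕ →o Submodule Rᵐᵒᵖ R :=
      ⟨fun n =>
        { carrier := {y | x ^ n * y = 0}
          add_mem' := by
            intro a b ha hb
            simp only [Set.mem_setOf_eq] at *
            rw [mul_add, ha, hb, add_zero]
          zero_mem' := by simp
          smul_mem' := by
            intro r y hy
            simp only [Set.mem_setOf_eq] at *
            rw [MulOpposite.smul_eq_mul_unop, ← mul_assoc, hy, zero_mul] },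
       by
        intro n m hnm y hy
        simp only [Set.mem_setOf_eq, Submodule.mem_mk, AddSubmonoid.mem_mk,
          AddSubsemigroup.mem_mk] at *
        obtain ⟨k, rfl⟩ := Nat.exists_eq_add_of_le hnm
        rw [add_comm n k, pow_add, mul_assoc, hy, mul_zero]⟩
    obtain ⟨n0, hstab⟩ := monotone_stabilizes_iff_noetherian.mpr inferInstance f
    obtain ⟨n, hn⟩ : ∃ n : ℕ, n = n0 + 1 := ⟨_, rfl⟩
    obtain ⟨c, _hcC, hγ0, hγC⟩ := hce (x ^ (2 * n)) (hxn (2 * n))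
    have hγcen : ∀ g : R, g * (x ^ (2 * n) * c) = (x ^ (2 * n) * c) * g := fun g =>
      Semigroup.mem_center_iff.mp hγC g
    obtain ⟨s, hs⟩ := hheart _ hγ0 hγcen
    -- h = x^(2n) * (c*s)
    have hh2n : h = x ^ (2 * n) * (c * s) := by rw [hs, mul_assoc]
    -- h * x^(m+1) = 0
    have hhxn : ∀ m : ℕ, h * x ^ (m + 1) = 0 := by
      intro m
      rw [pow_succ', ← mul_assoc, hx, zero_mul]
    -- x^(2n) * (xⁿ * (c*s)) = xⁿ * h = 0
    have hbeta : (x ^ n * (c * s)) ∈ f (2 * n) := by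
      show x ^ (2 * n) * (x ^ n * (c * s)) = 0
      have e1 : x ^ (2 * n) * (x ^ n * (c * s)) = x ^ n * (x ^ (2 * n) * (c * s)) := by
        rw [← mul_assoc (x ^ (2 * n)) (x ^ n) (c * s), ← mul_assoc (x ^ n) (x ^ (2 * n)) (c * s),
          ← pow_add, ← pow_add, add_comm (2 * n) n]
      rw [e1, ← hh2n, hcen (x ^ n), hn]
      exact hhxn n0
    have hfeq : f n = f (2 * n) := by
      rw [← hstab n (by omega), ← hstab (2 * n) (by omega)]
    have hbeta' : (x ^ n * (c * s)) ∈ f n := by rw [hfeq]; exact hbeta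
    have hzero : x ^ n * (x ^ n * (c * s)) = 0 := hbeta'
    apply hh0
    rw [hh2n, two_mul, pow_add, mul_assoc]
    exact hzero
  -- ## Step 2: `h` annihilates every commutator
  have hcomm : ∀ p q : R, h * (p * q - q * p) = 0 := by
    intro p q
    by_contra hdh0
    obtain ⟨d, hd⟩ : ∃ d : R, d = p * q - q * p := ⟨_, rfl⟩
    rw [← hd] at hdh0
    have hdh : d * h ≠ 0 := by rw [hcen d]; exact hdh0
    obtain ⟨c1, hc1C, hγ0', hγC'⟩ := hce (d * h) hdh
    have hc1 : ∀ g : R, g * c1 = c1 * g := Semigroup.mem_center_iff.mp hc1C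
    obtain ⟨k, hk⟩ : ∃ k : R, k = h * c1 := ⟨_, rfl⟩
    have hkcen : ∀ g : R, g * k = k * g := by
      intro g
      rw [hk, ← mul_assoc g h c1, hcen g, mul_assoc h g c1, hc1 g, ← mul_assoc h c1 g]
    obtain ⟨γ, hγdef⟩ : ∃ γ : R, γ = d * h * c1 := ⟨_, rfl⟩
    have hγ0 : γ ≠ 0 := by rw [hγdef]; exact hγ0'
    have hγcen : ∀ g : R, g * γ = γ * g := by
      intro g
      rw [hγdef]
      exact Semigroup.mem_center_iff.mp hγC' g
    have hγk : γ = k * d := by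
      rw [hγdef, mul_assoc, ← hk]
      exact hkcen d
    obtain ⟨s, hs⟩ := hheart γ hγ0 hγcen
    -- the right annihilator of γ is contained in that of h
    have hannγ : ∀ y : R, γ * y = 0 → h * y = 0 := by
      intro y hy
      rw [hs, mul_assoc, ← central_shift hγcen s y, hy, mul_zero]
    -- s is central modulo the annihilator of h
    have hscomm : ∀ r : R, h * (s * r - r * s) = 0 := by
      intro r
      apply hannγ
      rw [mul_sub, ← mul_assoc γ s r, ← central_shift hγcen r s, ← hs, hcen r, sub_self]
    -- the key element g with [p, g] = h
    obtain ⟨g, hg⟩ : ∃ g : R, g = k * (q * s) := ⟨_, rfl⟩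
    have hag : p * g - g * p = h := by
      have e1 : p * g - g * p = k * (p * (q * s) - (q * s) * p) := by
        rw [hg, central_shift hkcen p (q * s), mul_assoc k (q * s) p, ← mul_sub]
      have e2 : h = k * (d * s) := by
        rw [← mul_assoc, ← hγk]
        exact hs
      have e3 : p * (q * s) - (q * s) * p - d * s = q * (p * s - s * p) := by
        rw [hd]
        noncomm_ring
      have e4 : k * (q * (p * s - s * p)) = 0 := by
        have hw : h * (p * s - s * p) = 0 := by
          rw [← neg_sub (s * p) (p * s), mul_neg, hscomm p, neg_zero]
        rw [hk, mul_assoc h c1 (q * (p * s - s * p)), ← mul_assoc c1 q (p * s - s * p),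
          ← central_shift hcen (c1 * q) (p * s - s * p), hw, mul_zero]
      calc p * g - g * p = k * (p * (q * s) - (q * s) * p) := e1
        _ = k * (d * s + (p * (q * s) - (q * s) * p - d * s)) := by congr 1; abel
        _ = k * (d * s) + k * (q * (p * s - s * p)) := by rw [mul_add, e3]
        _ = k * (d * s) := by rw [e4, add_zero]
        _ = h := e2.symm
    have hgne : g ≠ 0 := by
      intro h0
      apply hh0
      rw [← hag, h0, mul_zero, zero_mul, sub_zero]
    obtain ⟨c2, hc2C, hgc2, hgc2C⟩ := hce g hgne
    have hc2 : ∀ g' : R, g' * c2 = c2 * g' := Semigroup.mem_center_iff.mp hc2C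
    have hcent2 : p * (g * c2) = (g * c2) * p := Semigroup.mem_center_iff.mp hgc2C p
    have hhc2 : h * c2 = 0 := by
      have h1 : (p * g - g * p) * c2 = 0 := by
        rw [sub_mul, mul_assoc p g c2, mul_assoc g p c2, hc2 p, ← mul_assoc g c2 p,
          ← hcent2, sub_self]
      rw [← hag]
      exact h1
    apply hgc2
    rw [hg, mul_assoc k (q * s) c2, hc2 (q * s), hk, mul_assoc h c1 (c2 * (q * s)),
      central_shift hc2 c1 (q * s), ← mul_assoc h c2 (c1 * (q * s)), hhc2, zero_mul]
  -- ## Step 3: commutators lie in every maximal left ideal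
  intro p q
  have key : ∀ y : R, IsNilpotent (y * (p * q - q * p)) := fun y =>
    hnil _ (by rw [← central_shift hcen y (p * q - q * p), hcomm p q, mul_zero])
  have hmax : ∀ M : Ideal R, M.IsMaximal → (p * q - q * p) ∈ M := by
    intro M hM
    by_contra hxM
    have hxspan : (p * q - q * p) ∈ Ideal.span {p * q - q * p} :=
      Ideal.subset_span (Set.mem_singleton _)
    have hlt : M < M ⊔ Ideal.span {p * q - q * p} := by
      refine lt_of_le_of_ne le_sup_left fun heq => hxM ?_
      rw [heq]
      exact Submodule.mem_sup_right hxspan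
    have hsup : M ⊔ Ideal.span {p * q - q * p} = ⊤ := (Ideal.isMaximal_def.mp hM).2 _ hlt
    have h1 : (1 : R) ∈ M ⊔ Ideal.span {p * q - q * p} := by
      rw [hsup]; exact Submodule.mem_top
    obtain ⟨m, hm, z, hz, hmz⟩ := Submodule.mem_sup.mp h1
    obtain ⟨y, hy⟩ := Submodule.mem_span_singleton.mp hz
    have hm1 : m = 1 - y * (p * q - q * p) := by
      rw [← hmz, ← hy, smul_eq_mul]
      abel
    have hunit : IsUnit m := by
      rw [hm1]
      exact (key y).isUnit_one_sub
    exact hM.ne_top (Ideal.eq_top_of_isUnit_mem M hm hunit)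
  show (p * q - q * p) ∈ sInf {J : Ideal R | ⊥ ≤ J ∧ J.IsMaximal}
  exact Submodule.mem_sInf.mpr fun M hM => hmax M hM.2
end

section
/- If R is a right Noetherian, centrally essential, subdirectly indecomposable ring with core H (the least nonzero two-sided ideal of R), then H is contained in the center C(R). -/
/-- The right annihilator of an element, as a right ideal (submodule over `Rᵐᵒᵖ`). -/
private def rAnn (R : Type*) [Ring R] (w : R) : Submodule Rᵐᵒᵖ R where
  carrier := {y | w * y = 0}
  zero_mem' := by simp
  add_mem' := by
    intro a b ha hb
    simp only [Set.mem_setOf_eq] at *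
    rw [mul_add, ha, hb, add_zero]
  smul_mem' := by
    intro c y hy
    simp only [Set.mem_setOf_eq] at *
    show w * (y * c.unop) = 0
    rw [← mul_assoc, hy, zero_mul]

private lemma mem_rAnn {R : Type*} [Ring R] {w y : R} : y ∈ rAnn R w ↔ w * y = 0 :=
  Iff.rfl

/-- If `R` is a right Noetherian, centrally essential, subdirectly indecomposable ring
with core `H` (the least nonzero two-sided ideal), then `H` is contained in the center. -/
theorem centrallyEssential_subdirectlyIndecomposable_core_central
    (R : Type*) [Ring R] [Nontrivial R]
    [IsNoetherian Rᵐᵒᵖ R]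
    (hce : IsCentrallyEssential R)
    (H : TwoSidedIdeal R)
    (hH : H = sInf {I : TwoSidedIdeal R | I ≠ ⊥})
    (hne : H ≠ ⊥) :
    (H : Set R) ⊆ Set.center R := by
  classical
  have hcen' : ∀ x : R, x ∈ Set.center R → ∀ g : R, g * x = x * g :=
    fun x h => Semigroup.mem_center_iff.mp h
  -- every element of `H` is a right multiple of any nonzero central element of `H`
  have key : ∀ u : R, u ∈ H → u ≠ 0 → u ∈ Set.center R → ∀ h ∈ H, ∃ t : R, h = u * t := by
    intro u huH hu0 huC h hh
    let J : TwoSidedIdeal R := TwoSidedIdeal.mk' {y | ∃ t, y = u * t}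
      ⟨0, by rw [mul_zero]⟩
      (fun {x y} hx hy => by
        obtain ⟨t, ht⟩ := hx; obtain ⟨s, hs⟩ := hy
        exact ⟨t + s, by rw [ht, hs, mul_add]⟩)
      (fun {x} hx => by
        obtain ⟨t, ht⟩ := hx
        exact ⟨-t, by rw [ht, mul_neg]⟩)
      (fun {x y} hy => by
        obtain ⟨t, ht⟩ := hy
        exact ⟨x * t, by rw [ht, ← mul_assoc, hcen' u huC x, mul_assoc]⟩)
      (fun {x y} hx => by
        obtain ⟨t, ht⟩ := hx
        exact ⟨t * y, by rw [ht, mul_assoc]⟩)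
    have hmemJ : ∀ y : R, y ∈ J ↔ ∃ t, y = u * t := fun y =>
      TwoSidedIdeal.mem_mk' _ _ _ _ _ _ y
    have hJne : J ≠ ⊥ := by
      intro hbot
      have hu : u ∈ J := (hmemJ u).mpr ⟨1, (mul_one u).symm⟩
      rw [hbot, TwoSidedIdeal.mem_bot] at hu
      exact hu0 hu
    have hle : H ≤ J := hH ▸ sInf_le hJne
    exact (hmemJ h).mp (hle hh)
  -- `H` contains a nonzero central element
  obtain ⟨a, haH, ha0⟩ : ∃ a : R, a ∈ H ∧ a ≠ 0 := by
    by_contra hcon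
    push_neg at hcon
    apply hne
    refine SetLike.ext fun x => ?_
    rw [TwoSidedIdeal.mem_bot]
    exact ⟨fun hx => hcon x hx, fun hx => hx ▸ H.zero_mem⟩
  obtain ⟨c₀, hc₀C, hac₀0, hac₀C⟩ := hce a ha0
  have hac₀H : a * c₀ ∈ H := H.mul_mem_right _ _ haH
  -- choose `z ∈ H ∩ C(R)`, nonzero, with maximal right annihilator
  set S : Set (Submodule Rᵐᵒᵖ R) :=
    {A | ∃ w : R, w ∈ H ∧ w ∈ Set.center R ∧ w ≠ 0 ∧ A = rAnn R w} with hS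
  have hSne : S.Nonempty := ⟨rAnn R (a * c₀), a * c₀, hac₀H, hac₀C, hac₀0, rfl⟩
  obtain ⟨A, hAS, hmax⟩ :=
    (wellFounded_gt (α := Submodule Rᵐᵒᵖ R)).has_min S hSne
  obtain ⟨z, hzH, hzC, hz0, rfl⟩ := hAS
  -- main claim: `z` annihilates all commutators
  have main : ∀ r x : R, z * (r * x - x * r) = 0 := by
    intro r x
    by_contra hzg
    set g : R := r * x - x * r with hg
    obtain ⟨c, hcC, hu0, huC⟩ := hce (z * g) hzg
    have hzgH : z * g ∈ H := H.mul_mem_right _ _ hzH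
    have huH : z * g * c ∈ H := H.mul_mem_right _ _ hzgH
    have hcomm : z * g * c = z * c * g := by
      rw [mul_assoc, hcen' c hcC g, ← mul_assoc]
    have hzc0 : z * c ≠ 0 := by
      intro h0
      exact hu0 (by rw [hcomm, h0, zero_mul])
    have hzcC : z * c ∈ Set.center R := Set.mul_mem_center hzC hcC
    have hzcH : z * c ∈ H := H.mul_mem_right _ _ hzH
    have hsub : rAnn R z ≤ rAnn R (z * c) := by
      intro y hy
      rw [mem_rAnn] at *
      rw [mul_assoc, ← hcen' c hcC y, ← mul_assoc, hy, zero_mul]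
    have hAeq : rAnn R (z * c) = rAnn R z := by
      by_contra hne'
      exact hmax (rAnn R (z * c)) ⟨z * c, hzcH, hzcC, hzc0, rfl⟩
        (lt_of_le_of_ne hsub fun h => hne' h.symm)
    obtain ⟨t, ht⟩ := key (z * g * c) huH hu0 huC (z * c) hzcH
    -- derive `z = z * (g * t)`
    have h1 : (1 : R) - g * t ∈ rAnn R (z * c) := by
      rw [mem_rAnn, mul_sub, mul_one, sub_eq_zero]
      calc z * c = z * g * c * t := ht
        _ = z * c * (g * t) := by rw [hcomm, mul_assoc]
    have hz1 : z * ((1 : R) - g * t) = 0 := by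
      rw [hAeq] at h1; exact h1
    have hzgt : z = z * (g * t) := by
      rw [mul_sub, mul_one, sub_eq_zero] at hz1
      exact hz1
    -- `z * r ≠ 0`
    have hzr0 : z * r ≠ 0 := by
      intro h0
      apply hzg
      have hzx : z * (x * r) = x * (z * r) := by
        rw [← mul_assoc, ← hcen' z hzC x, mul_assoc]
      rw [hg, mul_sub, ← mul_assoc, h0, zero_mul, hzx, h0, mul_zero, sub_zero]
    obtain ⟨c₁, hc₁C, h10, h1C⟩ := hce (z * r) hzr0
    -- `z * g * c₁ = 0`
    have hzgc₁ : z * g * c₁ = 0 := by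
      have eA : z * (r * x) * c₁ = z * r * c₁ * x := by
        rw [← mul_assoc z r x, mul_assoc (z * r) x c₁, hcen' c₁ hc₁C x, ← mul_assoc]
      have eB : z * (x * r) * c₁ = x * (z * r * c₁) := by
        rw [← mul_assoc z x r, ← hcen' z hzC x, mul_assoc x z r, mul_assoc x (z * r) c₁]
      have e1 : z * g * c₁ = z * r * c₁ * x - x * (z * r * c₁) := by
        rw [hg, mul_sub, sub_mul, eA, eB]
      rw [e1, hcen' (z * r * c₁) h1C x, sub_self]
    -- hence `z * c₁ = 0`, contradicting `z * r * c₁ ≠ 0`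
    have hzc₁ : z * c₁ = 0 := by
      calc z * c₁ = z * (g * t) * c₁ := by rw [← hzgt]
        _ = z * g * (t * c₁) := by rw [← mul_assoc z g t, mul_assoc (z * g) t c₁]
        _ = z * g * (c₁ * t) := by rw [hcen' c₁ hc₁C t]
        _ = z * g * c₁ * t := by rw [← mul_assoc]
        _ = 0 := by rw [hzgc₁, zero_mul]
    apply h10
    calc z * r * c₁ = z * (r * c₁) := mul_assoc z r c₁
      _ = z * (c₁ * r) := by rw [hcen' c₁ hc₁C r]
      _ = z * c₁ * r := (mul_assoc z c₁ r).symm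
      _ = 0 := by rw [hzc₁, zero_mul]
  -- conclude: every element of `H` is central
  intro h hh
  obtain ⟨t, ht⟩ := key z hzH hz0 hzC h hh
  refine Semigroup.mem_center_iff.mpr fun s => ?_
  have hsz : s * (z * t) = z * (s * t) := by
    rw [← mul_assoc, hcen' z hzC s, mul_assoc]
  have hm := main t s
  rw [mul_sub, sub_eq_zero] at hm
  rw [ht, hsz, ← hm, ← mul_assoc]
end

section
/- Let R be a centrally essential local ring with center C = C(R), and suppose J(C) ≠ 0. If r ∈ R satisfies r·J(C) = 0, then r ∈ J(C). -/
/-- In a (possibly noncommutative) local ring, a left-invertible element is a unit. -/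
theorem isUnit_of_leftInv {R : Type*} [Ring R] [IsLocalRing R]
    {t r : R} (h : t * r = 1) : IsUnit r := by
  have hidem : (r * t) * (r * t) = r * t := by
    calc (r * t) * (r * t) = r * (t * r) * t := by
          rw [mul_assoc, mul_assoc, mul_assoc]
    _ = r * t := by rw [h, mul_one]
  have hsum : (r * t) + (1 - r * t) = 1 := by abel
  rcases IsLocalRing.isUnit_or_isUnit_of_add_one hsum with hu | hu
  · -- idempotent unit is 1
    obtain ⟨u, hu⟩ := hu
    have h1 : r * t = 1 := by
      have h2 : (↑u⁻¹ : R) * ((r * t) * (r * t)) = (↑u⁻¹ : R) * (r * t) := by rw [hidem]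
      rw [← hu, ← mul_assoc, Units.inv_mul, one_mul] at h2
      rw [← hu, h2]
    exact ⟨⟨r, t, h1, h⟩, rfl⟩
  · obtain ⟨u, hu⟩ := hu
    have h0 : (r * t) * (1 - r * t) = 0 := by
      rw [mul_sub, mul_one, hidem, sub_self]
    have hrt : r * t = 0 := by
      have := congrArg (fun x => x * (↑u⁻¹ : R)) h0
      simpa [← hu, mul_assoc, Units.mul_inv] using this
    exfalso
    have hr0 : r = 0 := by
      calc r = r * (t * r) := by rw [h, mul_one]
      _ = (r * t) * r := by rw [mul_assoc]
      _ = 0 := by rw [hrt, zero_mul]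
    rw [hr0, mul_zero] at h
    exact zero_ne_one h

/-- In a local ring every nonunit lies in every maximal left ideal, hence in `J(R)`. -/
theorem mem_jacobson_bot_of_not_isUnit {R : Type*} [Ring R] [IsLocalRing R]
    {r : R} (hr : ¬ IsUnit r) : r ∈ Ideal.jacobson (⊥ : Ideal R) := by
  rw [Ideal.jacobson]
  refine Ideal.mem_sInf.2 ?_
  rintro M ⟨-, hM⟩
  by_contra hrM
  have htop : M ⊔ Ideal.span {r} = ⊤ :=
    hM.1.2 _ (lt_of_le_of_ne le_sup_left (fun h =>
      hrM (h ▸ Submodule.mem_sup_right (Ideal.mem_span_singleton_self r))))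
  have h1 : (1 : R) ∈ M ⊔ Ideal.span {r} := htop ▸ Submodule.mem_top
  obtain ⟨m, hm, y, hy, hmy⟩ := Submodule.mem_sup.1 h1
  obtain ⟨s, rfl⟩ := Submodule.mem_span_singleton.1 hy
  rcases IsLocalRing.isUnit_or_isUnit_of_add_one hmy with hu | hu
  · exact hM.1.1 (Ideal.eq_top_of_isUnit_mem M hm hu)
  · obtain ⟨u, hu⟩ := hu
    apply hr
    apply isUnit_of_leftInv (t := (↑u⁻¹ : R) * s)
    have : s • r = s * r := rfl
    rw [mul_assoc, ← this, ← hu]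
    exact Units.inv_mul u

/-- Let `R` be a centrally essential local ring whose center `C` has nonzero Jacobson
radical `J(C) = C ∩ J(R)`. If `r * J(C) = 0`, then `r ∈ J(C)`. -/
theorem centrallyEssential_local_annihilator_of_centerRadical
    (R : Type*) [Ring R] [IsLocalRing R]
    (hce : IsCentrallyEssential R)
    (hJC : ∃ c : R, c ∈ Set.center R ∧ c ∈ Ideal.jacobson (⊥ : Ideal R) ∧ c ≠ 0)
    (r : R)
    (hr : ∀ c : R, c ∈ Set.center R → c ∈ Ideal.jacobson (⊥ : Ideal R) → r * c = 0) :
    r ∈ Set.center R ∧ r ∈ Ideal.jacobson (⊥ : Ideal R) := by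
  obtain ⟨c₀, hc₀C, hc₀J, hc₀ne⟩ := hJC
  have hrc₀ : r * c₀ = 0 := hr c₀ hc₀C hc₀J
  by_cases hr0 : r = 0
  · subst hr0
    exact ⟨Set.zero_mem_center, Ideal.zero_mem _⟩
  -- r is not a unit, hence r ∈ J(R)
  have hrnu : ¬ IsUnit r := by
    rintro ⟨u, rfl⟩
    apply hc₀ne
    calc c₀ = (↑u⁻¹ : R) * (↑u * c₀) := by rw [← mul_assoc, Units.inv_mul, one_mul]
    _ = 0 := by rw [hrc₀, mul_zero]
  have hrJ : r ∈ Ideal.jacobson (⊥ : Ideal R) := mem_jacobson_bot_of_not_isUnit hrnu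
  -- get a central c with r * c ≠ 0 central
  obtain ⟨c, hcC, hrcne, hrcC⟩ := hce r hr0
  -- c must be a unit, otherwise c ∈ J(C) and r * c = 0
  have hcu : IsUnit c := by
    by_contra hcu
    exact hrcne (hr c hcC (mem_jacobson_bot_of_not_isUnit hcu))
  obtain ⟨u, rfl⟩ := hcu
  have hrC : r ∈ Set.center R := by
    have : r = (r * ↑u) * ↑u⁻¹ := by rw [mul_assoc, Units.mul_inv, mul_one]
    rw [this]
    exact Set.mul_mem_center hrcC (Set.units_inv_mem_center hcC)
  exact ⟨hrC, hrJ⟩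
end

section
/- Let R be a centrally essential ring which is both right and left subdirectly indecomposable, with core H. Then either H² = 0 or R is a field (in particular, commutative). -/
/-- If `R` is a centrally essential ring which is right and left subdirectly
indecomposable, with core `H` (the intersection of all nonzero two-sided ideals), then
either `H² = 0` or `R` is a field. -/
theorem centrallyEssential_subdirectlyIndecomposable_core_sq_zero_or_field
    (R : Type*) [Ring R] [Nontrivial R]
    (hce : IsCentrallyEssential R)
    (hr : sInf {S : Submodule Rᵐᵒᵖ R | S ≠ ⊥} ≠ ⊥)
    (hl : sInf {S : Ideal R | S ≠ ⊥} ≠ ⊥) :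
    (∀ a ∈ sInf {I : TwoSidedIdeal R | I ≠ ⊥}, ∀ b ∈ sInf {I : TwoSidedIdeal R | I ≠ ⊥},
      a * b = 0) ∨ IsField R := by
  classical
  set H := sInf {I : TwoSidedIdeal R | I ≠ ⊥} with hHdef
  by_cases hsq : ∀ a ∈ H, ∀ b ∈ H, a * b = 0
  · exact Or.inl hsq
  right
  push_neg at hsq
  obtain ⟨a, ha, b, hb, hab⟩ := hsq
  -- basic facts about `H`
  have hne_bot : ∀ (I : TwoSidedIdeal R) (y : R), y ∈ I → y ≠ 0 → I ≠ ⊥ := by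
    intro I y hy hy0 h
    rw [h] at hy
    rw [TwoSidedIdeal.mem_bot] at hy
    exact hy0 hy
  have hHle : ∀ I : TwoSidedIdeal R, I ≠ ⊥ → ∀ x ∈ H, x ∈ I := by
    intro I hI x hx
    exact sInf_le (show I ∈ {I : TwoSidedIdeal R | I ≠ ⊥} from hI) hx
  -- regularity of central nonzero elements of `H`
  have key : ∀ z : R, z ∈ H → z ∈ Set.center R → z ≠ 0 →
      ∀ r : R, r * z = 0 → r = 0 := by
    intro z hz hzc hz0 r hr
    by_contra hr0
    have hzc' : ∀ g : R, g * z = z * g := Semigroup.mem_center_iff.mp hzc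
    -- the (two-sided) annihilator of `z`
    set Ann : TwoSidedIdeal R := TwoSidedIdeal.mk' {s : R | s * z = 0}
      (by simp)
      (fun {x y} hx hy => by simp only [Set.mem_setOf_eq] at *; rw [add_mul, hx, hy, add_zero])
      (fun {x} hx => by simp only [Set.mem_setOf_eq] at *; rw [neg_mul, hx, neg_zero])
      (fun {x y} hy => by
        simp only [Set.mem_setOf_eq] at *
        rw [mul_assoc, hy, mul_zero])
      (fun {x y} hx => by
        simp only [Set.mem_setOf_eq] at *
        rw [mul_assoc, hzc' y, ← mul_assoc, hx, zero_mul]) with hAnn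
    have hrA : r ∈ Ann := by rw [hAnn, TwoSidedIdeal.mem_mk']; exact hr
    have hAnn_ne : Ann ≠ ⊥ := hne_bot Ann r hrA hr0
    have hHz : ∀ h ∈ H, h * z = 0 := by
      intro h hh
      have := hHle Ann hAnn_ne h hh
      rwa [hAnn, TwoSidedIdeal.mem_mk'] at this
    -- the right annihilator of `H`
    set A : TwoSidedIdeal R := TwoSidedIdeal.mk' {s : R | ∀ h ∈ H, h * s = 0}
      (by simp)
      (fun {x y} hx hy => by
        intro h hh; rw [mul_add, hx h hh, hy h hh, add_zero])
      (fun {x} hx => by intro h hh; rw [mul_neg, hx h hh, neg_zero])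
      (fun {x y} hy => by
        intro h hh
        rw [← mul_assoc]
        exact hy (h * x) (H.mul_mem_right h x hh))
      (fun {x y} hx => by
        intro h hh
        rw [← mul_assoc, hx h hh, zero_mul]) with hA
    have hzA : z ∈ A := by rw [hA, TwoSidedIdeal.mem_mk']; exact hHz
    have hA_ne : A ≠ ⊥ := hne_bot A z hzA hz0
    have hbA : b ∈ A := hHle A hA_ne b hb
    rw [hA, TwoSidedIdeal.mem_mk'] at hbA
    exact hab (hbA a ha)
  -- a central regular element `z ∈ H`
  have hab0 : a * b ≠ 0 := hab
  obtain ⟨c, hc, hz0, hzc⟩ := hce (a * b) hab0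
  set z : R := a * b * c with hzdef
  have hzH : z ∈ H := H.mul_mem_right _ c (H.mul_mem_right _ b ha)
  -- R is a domain
  have dom : ∀ x y : R, x * y = 0 → x = 0 ∨ y = 0 := by
    intro x y hxy
    by_contra h
    push_neg at h
    obtain ⟨hx0, hy0⟩ := h
    obtain ⟨c', hc', hx'0, hx'c⟩ := hce x hx0
    set x' : R := x * c' with hx'def
    have hx'c' : ∀ g : R, g * x' = x' * g := Semigroup.mem_center_iff.mp hx'c
    have hc'c : ∀ g : R, g * c' = c' * g := Semigroup.mem_center_iff.mp hc'
    have hx'y : x' * y = 0 := by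
      rw [hx'def, mul_assoc, ← hc'c y, ← mul_assoc, hxy, zero_mul]
    -- the annihilator of `x'`
    set Ann : TwoSidedIdeal R := TwoSidedIdeal.mk' {s : R | x' * s = 0}
      (by simp)
      (fun {u v} hu hv => by
        simp only [Set.mem_setOf_eq] at *; rw [mul_add, hu, hv, add_zero])
      (fun {u} hu => by simp only [Set.mem_setOf_eq] at *; rw [mul_neg, hu, neg_zero])
      (fun {u v} hv => by
        simp only [Set.mem_setOf_eq] at *
        rw [← mul_assoc, ← hx'c' u, mul_assoc, hv, mul_zero])
      (fun {u v} hu => by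
        simp only [Set.mem_setOf_eq] at *
        rw [← mul_assoc, hu, zero_mul]) with hAnn
    have hyA : y ∈ Ann := by rw [hAnn, TwoSidedIdeal.mem_mk']; exact hx'y
    have hAnn_ne : Ann ≠ ⊥ := hne_bot Ann y hyA hy0
    have hzA : z ∈ Ann := hHle Ann hAnn_ne z hzH
    rw [hAnn, TwoSidedIdeal.mem_mk'] at hzA
    exact hx'0 (key z hzH hzc hz0 x' hzA)
  -- a nonzero element of the least nonzero left ideal
  obtain ⟨t, htmem, ht0⟩ := (Submodule.ne_bot_iff _).mp hl
  have ht_in : ∀ x : R, x ≠ 0 → ∃ u : R, u * x = t := by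
    intro x hx
    have h1 : (Ideal.span {x} : Ideal R) ≠ ⊥ := by
      rw [Submodule.ne_bot_iff]
      exact ⟨x, Ideal.subset_span rfl, hx⟩
    have h2 : t ∈ (Ideal.span {x} : Ideal R) :=
      sInf_le (show (Ideal.span {x} : Ideal R) ∈ {S : Ideal R | S ≠ ⊥} from h1) htmem
    rwa [Ideal.mem_span_singleton'] at h2
  -- every nonzero element has a left inverse
  have hleft : ∀ x : R, x ≠ 0 → ∃ w : R, w * x = 1 := by
    have htt : t * t ≠ 0 := by
      intro h
      rcases dom t t h with h | h <;> exact ht0 h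
    obtain ⟨u, hu⟩ := ht_in (t * t) htt
    have hut : u * t = 1 := by
      have h1 : (u * t - 1) * t = 0 := by
        rw [sub_mul, one_mul, mul_assoc, hu, sub_self]
      rcases dom _ _ h1 with h | h
      · exact sub_eq_zero.mp h
      · exact absurd h ht0
    intro x hx
    obtain ⟨v, hv⟩ := ht_in x hx
    exact ⟨u * v, by rw [mul_assoc, hv, hut]⟩
  -- every nonzero element has a two-sided inverse
  have hinv : ∀ x : R, x ≠ 0 → ∃ w : R, x * w = 1 ∧ w * x = 1 := by
    intro x hx
    obtain ⟨w, hw⟩ := hleft x hx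
    have hw0 : w ≠ 0 := by
      intro h; rw [h, zero_mul] at hw; exact one_ne_zero hw.symm
    obtain ⟨w2, hw2⟩ := hleft w hw0
    have : w2 = x := by
      calc w2 = w2 * (w * x) := by rw [hw, mul_one]
        _ = (w2 * w) * x := by rw [mul_assoc]
        _ = x := by rw [hw2, one_mul]
    exact ⟨w, by rw [← this, hw2], hw⟩
  -- commutativity
  have hcentral : ∀ x : R, x ≠ 0 → x ∈ Set.center R := by
    intro x hx
    obtain ⟨c', hc', hx'0, hx'c⟩ := hce x hx
    have hc'0 : c' ≠ 0 := by
      intro h; rw [h, mul_zero] at hx'0; exact hx'0 rfl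
    obtain ⟨d, hcd, hdc⟩ := hinv c' hc'0
    have hc'c : ∀ g : R, g * c' = c' * g := Semigroup.mem_center_iff.mp hc'
    have hdcent : d ∈ Set.center R := by
      rw [Semigroup.mem_center_iff]
      intro g
      calc g * d = (d * c') * (g * d) := by rw [hdc, one_mul]
        _ = d * (c' * g) * d := by rw [mul_assoc, mul_assoc, mul_assoc]
        _ = d * (g * c') * d := by rw [hc'c]
        _ = d * g * (c' * d) := by rw [mul_assoc, mul_assoc, mul_assoc]
        _ = d * g := by rw [hcd, mul_one]
    have : x = (x * c') * d := by rw [mul_assoc, hcd, mul_one]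
    rw [this]
    exact Set.mul_mem_center hx'c hdcent
  refine ⟨exists_pair_ne R, ?_, ?_⟩
  · intro x y
    by_cases hx : x = 0
    · rw [hx, zero_mul, mul_zero]
    · exact (Semigroup.mem_center_iff.mp (hcentral x hx) y).symm
  · intro x hx
    obtain ⟨w, hw, _⟩ := hinv x hx
    exact ⟨w, hw⟩
end

section
/- Let F be a field of characteristic 0 or of characteristic p ≠ 2, let V be a 3-dimensional F-vector space with basis e₁, e₂, e₃, and let R = Λ(V) be the exterior algebra of V. Then every nonzero two-sided ideal of R contains the element e₁∧e₂∧e₃; in particular, R is subdirectly indecomposable with core H equal to the one-dimensional subspace F·(e₁∧e₂∧e₃). -/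
namespace ExtAux3

open ExteriorAlgebra

variable {F : Type*} [Field F] {V : Type*} [AddCommGroup V] [Module F V]

lemma isq (x : V) (z : ExteriorAlgebra F V) : ι F x * (ι F x * z) = 0 := by
  rw [← mul_assoc, ι_sq_zero, zero_mul]

lemma iswap (x y : V) : ι F y * ι F x = -(ι F x * ι F y) :=
  eq_neg_of_add_eq_zero_right (ι_add_mul_swap x y)

lemma iswap' (x y : V) (z : ExteriorAlgebra F V) :
    ι F y * (ι F x * z) = -(ι F x * (ι F y * z)) := by
  rw [← mul_assoc, iswap, neg_mul, mul_assoc]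

noncomputable def MM (e : Module.Basis (Fin 3) F V) : Fin 8 → ExteriorAlgebra F V :=
  ![1, ι F (e 0), ι F (e 1), ι F (e 2),
    ι F (e 0) * ι F (e 1), ι F (e 0) * ι F (e 2), ι F (e 1) * ι F (e 2),
    ι F (e 0) * (ι F (e 1) * ι F (e 2))]

example (e : Module.Basis (Fin 3) F V) : MM e 7 = ι F (e 0) * (ι F (e 1) * ι F (e 2)) := rfl
example (e : Module.Basis (Fin 3) F V) : MM e 4 = ι F (e 0) * ι F (e 1) := rfl

lemma omega_ne (e : Module.Basis (Fin 3) F V) :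
    ι F (e 0) * (ι F (e 1) * ι F (e 2)) ≠ 0 := by
  classical
  intro h
  have h2 : ιMulti F 3 (⇑e) = ι F (e 0) * (ι F (e 1) * ι F (e 2)) := by
    simp [ιMulti_apply, List.ofFn_succ, Matrix.vecTail, Function.comp]
  let f : ∀ i : ℕ, V [⋀^Fin i]→ₗ[F] F := fun i =>
    match i with
    | 3 => e.det
    | _ => 0
  have h3 := liftAlternating_apply_ιMulti (R := F) f (⇑e)
  rw [h2, h] at h3
  simp only [map_zero] at h3
  have hdet : f 3 ⇑e = 1 := e.det_self
  rw [hdet] at h3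
  exact one_ne_zero h3.symm

def Tset (e : Module.Basis (Fin 3) F V) : Set (ExteriorAlgebra F V) :=
  {1, ι F (e 0), ι F (e 1), ι F (e 2),
    ι F (e 0) * ι F (e 1), ι F (e 0) * ι F (e 2), ι F (e 1) * ι F (e 2),
    ι F (e 0) * (ι F (e 1) * ι F (e 2))}

lemma range_MM (e : Module.Basis (Fin 3) F V) : Set.range (MM e) = Tset e := by
  rw [MM, Tset]
  simp only [Matrix.range_cons, Matrix.range_empty, Set.union_empty, Set.singleton_union]

set_option maxHeartbeats 1000000 in
lemma prod_mem (e : Module.Basis (Fin 3) F V) {x y : ExteriorAlgebra F V}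
    (hx : x ∈ Tset e) (hy : y ∈ Tset e) :
    x * y ∈ Submodule.span F (Tset e) := by
  have t0 : (1 : ExteriorAlgebra F V) ∈ Submodule.span F (Tset e) :=
    Submodule.subset_span (by left; rfl)
  have t1 : ι F (e 0) ∈ Submodule.span F (Tset e) :=
    Submodule.subset_span (by right; left; rfl)
  have t2 : ι F (e 1) ∈ Submodule.span F (Tset e) :=
    Submodule.subset_span (by right; right; left; rfl)
  have t3 : ι F (e 2) ∈ Submodule.span F (Tset e) :=
    Submodule.subset_span (by right; right; right; left; rfl)
  have t4 : ι F (e 0) * ι F (e 1) ∈ Submodule.span F (Tset e) :=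
    Submodule.subset_span (by right; right; right; right; left; rfl)
  have t5 : ι F (e 0) * ι F (e 2) ∈ Submodule.span F (Tset e) :=
    Submodule.subset_span (by right; right; right; right; right; left; rfl)
  have t6 : ι F (e 1) * ι F (e 2) ∈ Submodule.span F (Tset e) :=
    Submodule.subset_span (by right; right; right; right; right; right; left; rfl)
  have t7 : ι F (e 0) * (ι F (e 1) * ι F (e 2)) ∈ Submodule.span F (Tset e) :=
    Submodule.subset_span (by right; right; right; right; right; right; right; rfl)
  simp only [Tset, Set.mem_insert_iff, Set.mem_singleton_iff] at hx hy
  rcases hx with rfl | rfl | rfl | rfl | rfl | rfl | rfl | rfl <;>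
    rcases hy with rfl | rfl | rfl | rfl | rfl | rfl | rfl | rfl <;>
    (try simp only [mul_assoc, one_mul, mul_one, ι_sq_zero, isq,
      iswap (e 0) (e 1), iswap (e 0) (e 2), iswap (e 1) (e 2),
      iswap' (e 0) (e 1), iswap' (e 0) (e 2), iswap' (e 1) (e 2),
      mul_neg, neg_mul, neg_neg, mul_zero, zero_mul, neg_zero]) <;>
    first
    | exact zero_mem _
    | exact t0 | exact t1 | exact t2 | exact t3 | exact t4 | exact t5 | exact t6 | exact t7
    | exact neg_mem t4 | exact neg_mem t5 | exact neg_mem t6 | exact neg_mem t7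


lemma mem_span (e : Module.Basis (Fin 3) F V) (x : ExteriorAlgebra F V) :
    x ∈ Submodule.span F (Tset e) := by
  induction x using ExteriorAlgebra.induction with
  | algebraMap r =>
      rw [Algebra.algebraMap_eq_smul_one]
      exact Submodule.smul_mem _ r (Submodule.subset_span (by left; rfl))
  | ι v =>
      rw [← Module.Basis.sum_repr e v, map_sum]
      refine Submodule.sum_mem _ fun i _ => ?_
      rw [map_smul]
      refine Submodule.smul_mem _ _ (Submodule.subset_span ?_)
      fin_cases i
      · right; left; rfl
      · right; right; left; rfl
      · right; right; right; left; rfl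
  | mul a b ha hb =>
      refine Submodule.span_induction₂ (p := fun a b _ _ => a * b ∈ Submodule.span F (Tset e))
        (fun x y hx hy => prod_mem e hx hy)
        (fun y _ => by show 0 * y ∈ _; rw [zero_mul]; exact zero_mem _)
        (fun x _ => by show x * 0 ∈ _; rw [mul_zero]; exact zero_mem _)
        (fun x y z _ _ _ h1 h2 => by show (x + y) * z ∈ _; rw [add_mul]; exact add_mem h1 h2)
        (fun x y z _ _ _ h1 h2 => by show x * (y + z) ∈ _; rw [mul_add]; exact add_mem h1 h2)
        (fun r x y _ _ h => by show (r • x) * y ∈ _; rw [smul_mul_assoc]; exact Submodule.smul_mem _ r h)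
        (fun r x y _ _ h => by show x * (r • y) ∈ _; rw [mul_smul_comm]; exact Submodule.smul_mem _ r h)
        ha hb
  | add a b ha hb => exact add_mem ha hb

lemma coords (e : Module.Basis (Fin 3) F V) (x : ExteriorAlgebra F V) :
    ∃ c : Fin 8 → F,
      x = c 0 • (1 : ExteriorAlgebra F V) + c 1 • ι F (e 0) + c 2 • ι F (e 1) + c 3 • ι F (e 2)
        + c 4 • (ι F (e 0) * ι F (e 1)) + c 5 • (ι F (e 0) * ι F (e 2))
        + c 6 • (ι F (e 1) * ι F (e 2))
        + c 7 • (ι F (e 0) * (ι F (e 1) * ι F (e 2))) := by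
  have hx : x ∈ Submodule.span F (Set.range (MM e)) := by
    rw [range_MM]; exact mem_span e x
  obtain ⟨c, hc⟩ := (Submodule.mem_span_range_iff_exists_fun F).mp hx
  refine ⟨c, ?_⟩
  rw [← hc, Fin.sum_univ_eight]
  rfl


lemma ext0 (e : Module.Basis (Fin 3) F V) {a : F}
    (ha : a • (ι F (e 0) * (ι F (e 1) * ι F (e 2))) = 0) : a = 0 := by
  rcases smul_eq_zero.mp ha with h | h
  · exact h
  · exact absurd h (omega_ne e)

lemma structureL (e : Module.Basis (Fin 3) F V) (x : ExteriorAlgebra F V)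
    (h1 : x * (ι F (e 0) * (ι F (e 1) * ι F (e 2))) = 0)
    (h2 : x * (ι F (e 1) * ι F (e 2)) = 0)
    (h3 : x * (ι F (e 0) * ι F (e 2)) = 0)
    (h4 : x * (ι F (e 0) * ι F (e 1)) = 0)
    (h5 : x * ι F (e 2) = 0)
    (h6 : x * ι F (e 1) = 0)
    (h7 : x * ι F (e 0) = 0) :
    ∃ c : F, x = c • (ι F (e 0) * (ι F (e 1) * ι F (e 2))) := by
  obtain ⟨c, hc⟩ := coords e x
  subst hc
  simp only [add_mul, smul_mul_assoc, mul_assoc, one_mul, ι_sq_zero, isq,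
    iswap (e 0) (e 1), iswap (e 0) (e 2), iswap (e 1) (e 2),
    iswap' (e 0) (e 1), iswap' (e 0) (e 2), iswap' (e 1) (e 2),
    mul_neg, neg_mul, neg_neg, mul_zero, zero_mul, neg_zero, smul_zero, smul_neg,
    add_zero, zero_add] at h1 h2 h3 h4 h5 h6 h7
  have hc0 : c 0 = 0 := ext0 e h1
  simp only [hc0, zero_smul, zero_add, add_zero, neg_eq_zero] at h2 h3 h4 h5 h6 h7
  have hc1 : c 1 = 0 := ext0 e h2
  have hc2 : c 2 = 0 := ext0 e h3
  have hc3 : c 3 = 0 := ext0 e h4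
  simp only [hc1, hc2, hc3, zero_smul, neg_zero, zero_add, add_zero, neg_eq_zero] at h5 h6 h7
  have hc4 : c 4 = 0 := ext0 e h5
  have hc5 : c 5 = 0 := ext0 e h6
  have hc6 : c 6 = 0 := ext0 e h7
  exact ⟨c 7, by simp only [hc0, hc1, hc2, hc3, hc4, hc5, hc6, zero_smul, zero_add, add_zero]⟩

lemma mul_omega (e : Module.Basis (Fin 3) F V) (x : ExteriorAlgebra F V) :
    ∃ c : F, x * (ι F (e 0) * (ι F (e 1) * ι F (e 2)))
      = c • (ι F (e 0) * (ι F (e 1) * ι F (e 2))) := by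
  obtain ⟨c, hc⟩ := coords e x
  subst hc
  refine ⟨c 0, ?_⟩
  simp only [add_mul, smul_mul_assoc, mul_assoc, one_mul, ι_sq_zero, isq,
    iswap (e 0) (e 1), iswap (e 0) (e 2), iswap (e 1) (e 2),
    iswap' (e 0) (e 1), iswap' (e 0) (e 2), iswap' (e 1) (e 2),
    mul_neg, neg_mul, neg_neg, mul_zero, zero_mul, neg_zero, smul_zero, smul_neg,
    add_zero, zero_add]

lemma omega_mul (e : Module.Basis (Fin 3) F V) (x : ExteriorAlgebra F V) :
    ∃ c : F, (ι F (e 0) * (ι F (e 1) * ι F (e 2))) * x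
      = c • (ι F (e 0) * (ι F (e 1) * ι F (e 2))) := by
  obtain ⟨c, hc⟩ := coords e x
  subst hc
  refine ⟨c 0, ?_⟩
  simp only [mul_add, mul_smul_comm, mul_assoc, mul_one, ι_sq_zero, isq,
    iswap (e 0) (e 1), iswap (e 0) (e 2), iswap (e 1) (e 2),
    iswap' (e 0) (e 1), iswap' (e 0) (e 2), iswap' (e 1) (e 2),
    mul_neg, neg_mul, neg_neg, mul_zero, zero_mul, neg_zero, smul_zero, smul_neg,
    add_zero, zero_add]

end ExtAux3

set_option maxHeartbeats 1600000 in
open ExtAux3 in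
/-- The exterior algebra `R` of a 3-dimensional vector space (with basis `e₀, e₁, e₂`)
over a field of characteristic `0` or `p ≠ 2` is subdirectly indecomposable: every
nonzero two-sided ideal contains the nonzero element `e₀ ∧ e₁ ∧ e₂`, and the core (the
infimum of all nonzero two-sided ideals) is exactly the line `F · (e₀ ∧ e₁ ∧ e₂)`. -/
theorem exteriorAlgebra_dim_three_subdirectlyIndecomposable
    (F : Type*) [Field F] (V : Type*) [AddCommGroup V] [Module F V]
    (hchar : ringChar F ≠ 2)
    (e : Module.Basis (Fin 3) F V) :
    ExteriorAlgebra.ι F (e 0) * ExteriorAlgebra.ι F (e 1) * ExteriorAlgebra.ι F (e 2)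
        ≠ 0 ∧
    (∀ I : TwoSidedIdeal (ExteriorAlgebra F V), I ≠ ⊥ →
      ExteriorAlgebra.ι F (e 0) * ExteriorAlgebra.ι F (e 1) * ExteriorAlgebra.ι F (e 2)
        ∈ I) ∧
    SetLike.coe (sInf {I : TwoSidedIdeal (ExteriorAlgebra F V) | I ≠ ⊥}) =
      Set.range (fun c : F =>
        c • (ExteriorAlgebra.ι F (e 0) * ExteriorAlgebra.ι F (e 1) *
          ExteriorAlgebra.ι F (e 2))) := by
  classical
  rw [mul_assoc]
  have smulmem : ∀ (I : TwoSidedIdeal (ExteriorAlgebra F V)) (c : F) y, y ∈ I → c • y ∈ I := by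
    intro I c y hy
    rw [Algebra.smul_def]
    exact I.mul_mem_left _ _ hy
  have key : ∀ I : TwoSidedIdeal (ExteriorAlgebra F V), I ≠ ⊥ → (ExteriorAlgebra.ι F (e 0)) * ((ExteriorAlgebra.ι F (e 1)) * (ExteriorAlgebra.ι F (e 2))) ∈ I := by
    intro I hI
    have hx : ∃ x, x ∈ I ∧ x ≠ 0 := by
      by_contra h
      push_neg at h
      refine hI (eq_bot_iff.mpr ?_)
      intro z hz
      rw [TwoSidedIdeal.mem_bot]
      exact h z hz
    obtain ⟨x, hxI, hx0⟩ := hx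
    have fin : ∀ y : ExteriorAlgebra F V, y ∈ I → y ≠ 0 →
        (∃ c : F, y = c • ((ExteriorAlgebra.ι F (e 0)) * ((ExteriorAlgebra.ι F (e 1)) * (ExteriorAlgebra.ι F (e 2))))) → (ExteriorAlgebra.ι F (e 0)) * ((ExteriorAlgebra.ι F (e 1)) * (ExteriorAlgebra.ι F (e 2))) ∈ I := by
      rintro y hy hy0 ⟨c, rfl⟩
      have hc : c ≠ 0 := fun h => hy0 (by rw [h, zero_smul])
      have h2 := smulmem I c⁻¹ _ hy
      rwa [smul_smul, inv_mul_cancel₀ hc, one_smul] at h2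
    by_cases h1 : x * ((ExteriorAlgebra.ι F (e 0)) * ((ExteriorAlgebra.ι F (e 1)) * (ExteriorAlgebra.ι F (e 2)))) = 0
    · by_cases h2 : x * ((ExteriorAlgebra.ι F (e 1)) * (ExteriorAlgebra.ι F (e 2))) = 0
      · by_cases h3 : x * ((ExteriorAlgebra.ι F (e 0)) * (ExteriorAlgebra.ι F (e 2))) = 0
        · by_cases h4 : x * ((ExteriorAlgebra.ι F (e 0)) * (ExteriorAlgebra.ι F (e 1))) = 0
          · by_cases h5 : x * (ExteriorAlgebra.ι F (e 2)) = 0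
            · by_cases h6 : x * (ExteriorAlgebra.ι F (e 1)) = 0
              · by_cases h7 : x * (ExteriorAlgebra.ι F (e 0)) = 0
                · exact fin x hxI hx0 (structureL e x h1 h2 h3 h4 h5 h6 h7)
                · refine fin (x * (ExteriorAlgebra.ι F (e 0))) (I.mul_mem_right _ _ hxI) h7
                    (structureL e _ ?_ ?_ ?_ ?_ ?_ ?_ ?_) <;>
                    simp only [mul_assoc, one_mul, mul_one, ExteriorAlgebra.ι_sq_zero, isq,
                      iswap (e 0) (e 1), iswap (e 0) (e 2), iswap (e 1) (e 2),
                      iswap' (e 0) (e 1), iswap' (e 0) (e 2), iswap' (e 1) (e 2),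
                      mul_neg, neg_mul, neg_neg, mul_zero, zero_mul, neg_zero, h1, h2, h3, h4, h5, h6]
              · refine fin (x * (ExteriorAlgebra.ι F (e 1))) (I.mul_mem_right _ _ hxI) h6
                  (structureL e _ ?_ ?_ ?_ ?_ ?_ ?_ ?_) <;>
                  simp only [mul_assoc, one_mul, mul_one, ExteriorAlgebra.ι_sq_zero, isq,
                    iswap (e 0) (e 1), iswap (e 0) (e 2), iswap (e 1) (e 2),
                    iswap' (e 0) (e 1), iswap' (e 0) (e 2), iswap' (e 1) (e 2),
                    mul_neg, neg_mul, neg_neg, mul_zero, zero_mul, neg_zero, h1, h2, h3, h4, h5]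
            · refine fin (x * (ExteriorAlgebra.ι F (e 2))) (I.mul_mem_right _ _ hxI) h5
                (structureL e _ ?_ ?_ ?_ ?_ ?_ ?_ ?_) <;>
                simp only [mul_assoc, one_mul, mul_one, ExteriorAlgebra.ι_sq_zero, isq,
                  iswap (e 0) (e 1), iswap (e 0) (e 2), iswap (e 1) (e 2),
                  iswap' (e 0) (e 1), iswap' (e 0) (e 2), iswap' (e 1) (e 2),
                  mul_neg, neg_mul, neg_neg, mul_zero, zero_mul, neg_zero, h1, h2, h3, h4]
          · refine fin (x * ((ExteriorAlgebra.ι F (e 0)) * (ExteriorAlgebra.ι F (e 1)))) (I.mul_mem_right _ _ hxI) h4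
              (structureL e _ ?_ ?_ ?_ ?_ ?_ ?_ ?_) <;>
              simp only [mul_assoc, one_mul, mul_one, ExteriorAlgebra.ι_sq_zero, isq,
                iswap (e 0) (e 1), iswap (e 0) (e 2), iswap (e 1) (e 2),
                iswap' (e 0) (e 1), iswap' (e 0) (e 2), iswap' (e 1) (e 2),
                mul_neg, neg_mul, neg_neg, mul_zero, zero_mul, neg_zero, h1, h2, h3]
        · refine fin (x * ((ExteriorAlgebra.ι F (e 0)) * (ExteriorAlgebra.ι F (e 2)))) (I.mul_mem_right _ _ hxI) h3
            (structureL e _ ?_ ?_ ?_ ?_ ?_ ?_ ?_) <;>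
            simp only [mul_assoc, one_mul, mul_one, ExteriorAlgebra.ι_sq_zero, isq,
              iswap (e 0) (e 1), iswap (e 0) (e 2), iswap (e 1) (e 2),
              iswap' (e 0) (e 1), iswap' (e 0) (e 2), iswap' (e 1) (e 2),
              mul_neg, neg_mul, neg_neg, mul_zero, zero_mul, neg_zero, h1, h2]
      · refine fin (x * ((ExteriorAlgebra.ι F (e 1)) * (ExteriorAlgebra.ι F (e 2)))) (I.mul_mem_right _ _ hxI) h2
          (structureL e _ ?_ ?_ ?_ ?_ ?_ ?_ ?_) <;>
          simp only [mul_assoc, one_mul, mul_one, ExteriorAlgebra.ι_sq_zero, isq,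
            iswap (e 0) (e 1), iswap (e 0) (e 2), iswap (e 1) (e 2),
            iswap' (e 0) (e 1), iswap' (e 0) (e 2), iswap' (e 1) (e 2),
            mul_neg, neg_mul, neg_neg, mul_zero, zero_mul, neg_zero, h1]
    · obtain ⟨c, hc⟩ := mul_omega e x
      exact fin (x * ((ExteriorAlgebra.ι F (e 0)) * ((ExteriorAlgebra.ι F (e 1)) * (ExteriorAlgebra.ι F (e 2))))) (I.mul_mem_right _ _ hxI) h1 ⟨c, hc⟩
  refine ⟨omega_ne e, key, ?_⟩
  let J : TwoSidedIdeal (ExteriorAlgebra F V) :=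
    TwoSidedIdeal.mk' (Set.range fun c : F => c • ((ExteriorAlgebra.ι F (e 0)) * ((ExteriorAlgebra.ι F (e 1)) * (ExteriorAlgebra.ι F (e 2)))))
      ⟨0, zero_smul F _⟩
      (by rintro _ _ ⟨c, rfl⟩ ⟨d, rfl⟩; exact ⟨c + d, add_smul c d _⟩)
      (by rintro _ ⟨c, rfl⟩; exact ⟨-c, neg_smul c _⟩)
      (by
        rintro a _ ⟨c, rfl⟩
        obtain ⟨d, hd⟩ := mul_omega e a
        exact ⟨c * d, by rw [mul_smul_comm, hd, smul_smul]⟩)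
      (by
        rintro _ b ⟨c, rfl⟩
        obtain ⟨d, hd⟩ := omega_mul e b
        exact ⟨c * d, by rw [smul_mul_assoc, hd, smul_smul]⟩)
  have hJne : J ≠ ⊥ := by
    intro h
    have hm : (ExteriorAlgebra.ι F (e 0)) * ((ExteriorAlgebra.ι F (e 1)) * (ExteriorAlgebra.ι F (e 2))) ∈ J := by
      refine (TwoSidedIdeal.mem_mk' _ _ _ _ _ _ _).mpr ?_
      exact ⟨1, one_smul F _⟩
    rw [h, TwoSidedIdeal.mem_bot] at hm
    exact omega_ne e hm
  have hEq : sInf {I : TwoSidedIdeal (ExteriorAlgebra F V) | I ≠ ⊥} = J := by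
    refine le_antisymm (sInf_le hJne) (le_sInf ?_)
    intro I hI
    rw [TwoSidedIdeal.le_iff]
    intro z hz
    rw [SetLike.mem_coe] at hz
    replace hz := (TwoSidedIdeal.mem_mk' _ _ _ _ _ _ _).mp hz
    obtain ⟨c, rfl⟩ := hz
    exact smulmem I c _ (key I hI)
  rw [hEq]
  exact TwoSidedIdeal.coe_mk' _ _ _ _ _ _
end

section
/- Let F be a field of characteristic 0 or of characteristic p ≠ 2, let V be a 3-dimensional F-vector space with basis e₁, e₂, e₃, and let R = Λ(V) be the exterior algebra of V. Then the center C(R) of R is not a subdirectly indecomposable ring: the ideals of C(R) generated by e₁∧e₂ and by e₁∧e₂∧e₃ are nonzero and have zero intersection. -/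
/-!
The grading involution of `⋀V` fixes even elements and negates odd ones. By supercommutativity
`v * a = involute a * v` for `v ∈ V`, so a central `a` satisfies `involute a * v = a * v`, and
hence every multiple `a * (e₀ ∧ e₁)` of `e₀ ∧ e₁` by a central `a` is even. The top form
`e₀ ∧ e₁ ∧ e₂` is killed by `V` on both sides, so it is central and all its multiples are scalar
multiples of it, hence odd. An element that is both even and odd vanishes once `2 ≠ 0`.
-/

open ExteriorAlgebra CliffordAlgebra

namespace ExteriorAlgebra

section CommRing

variable {R M : Type*} [CommRing R] [AddCommGroup M] [Module R M]

theorem ι_mul_eq_involute_mul (v : M) (x : ExteriorAlgebra R M) :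
    ι R v * x = involute x * ι R v := by
  induction x using ExteriorAlgebra.induction with
  | algebraMap r => rw [AlgHom.commutes, Algebra.commutes]
  | ι m => rw [involute_ι, neg_mul, eq_neg_iff_add_eq_zero, ι_add_mul_swap]
  | mul x y hx hy => rw [map_mul, ← mul_assoc, hx, mul_assoc, hy, ← mul_assoc]
  | add x y hx hy => rw [mul_add, hx, hy, map_add, add_mul]

theorem mem_center_of_forall_ι_mul_eq {x : ExteriorAlgebra R M}
    (hx : ∀ v, ι R v * x = x * ι R v) : x ∈ Subring.center (ExteriorAlgebra R M) := by
  rw [Subring.mem_center_iff]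
  intro y
  induction y using ExteriorAlgebra.induction with
  | algebraMap r => rw [Algebra.commutes]
  | ι m => exact hx m
  | mul y z hy hz => rw [mul_assoc, hz, ← mul_assoc, hy, mul_assoc]
  | add y z hy hz => rw [add_mul, mul_add, hy, hz]

theorem mem_center_of_involute_eq {x : ExteriorAlgebra R M} (hx : involute x = x) :
    x ∈ Subring.center (ExteriorAlgebra R M) :=
  mem_center_of_forall_ι_mul_eq fun v => by rw [ι_mul_eq_involute_mul, hx]

theorem involute_mul_ι_of_mem_center {a : ExteriorAlgebra R M}
    (ha : a ∈ Subring.center (ExteriorAlgebra R M)) (v : M) :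
    involute a * ι R v = a * ι R v := by
  rw [← ι_mul_eq_involute_mul, Subring.mem_center_iff.mp ha]

theorem involute_ι_mul_ι (v w : M) : involute (ι R v * ι R w) = ι R v * ι R w := by
  rw [map_mul, involute_ι, involute_ι, neg_mul_neg]

theorem involute_mul_ι_mul_ι_of_mem_center {a : ExteriorAlgebra R M}
    (ha : a ∈ Subring.center (ExteriorAlgebra R M)) (v w : M) :
    involute (a * (ι R v * ι R w)) = a * (ι R v * ι R w) := by
  rw [map_mul, involute_ι_mul_ι, ← mul_assoc, involute_mul_ι_of_mem_center ha, mul_assoc]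

theorem involute_ιMulti {n : ℕ} (f : Fin n → M) :
    involute (ιMulti R n f) = (-1) ^ n • ιMulti R n f := by
  induction n with
  | zero => rw [ιMulti_zero_apply, map_one, pow_zero, one_smul]
  | succ n ih =>
    rw [ιMulti_succ_apply, map_mul, involute_ι, ih, mul_smul_comm, neg_mul, pow_succ',
      mul_smul, neg_one_smul, smul_neg]

theorem ιMulti_ne_zero_of_basis [Nontrivial R] {n : ℕ} (b : Module.Basis (Fin n) R M) :
    ιMulti R n b ≠ 0 := by
  intro h
  have hdet := exteriorPower.alternatingMapLinearEquiv_apply_ιMulti b.det b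
  rw [b.det_self, show exteriorPower.ιMulti R n b = 0 from Subtype.ext h, map_zero] at hdet
  exact zero_ne_one hdet

end CommRing

section Field

variable {K V : Type*} [Field K] [AddCommGroup V] [Module K V]

theorem eq_zero_of_involute_eq_self_of_involute_eq_neg (hK : ringChar K ≠ 2)
    {x : ExteriorAlgebra K V} (heven : involute x = x) (hodd : involute x = -x) : x = 0 := by
  have h2x : (2 : K) • x = 0 := by
    rw [two_smul, ← neg_eq_iff_add_eq_zero, ← hodd, heven]
  exact (smul_eq_zero.mp h2x).resolve_left (Ring.two_ne_zero hK)

variable [FiniteDimensional K V]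

theorem ιMulti_eq_zero_of_finrank_lt {n : ℕ} (hn : Module.finrank K V < n) (f : Fin n → V) :
    ιMulti K n f = 0 :=
  (ιMulti K n).map_linearDependent f fun hf => by
    simpa using (hf.fintype_card_le_finrank.trans_lt hn).ne

variable {n : ℕ}

theorem ι_mul_ιMulti_of_finrank_eq (hn : Module.finrank K V = n) (v : V) (f : Fin n → V) :
    ι K v * ιMulti K n f = 0 := by
  rw [← ιMulti_eq_zero_of_finrank_lt (n := n + 1) (by omega) (Matrix.vecCons v f),
    ιMulti_succ_apply]
  rfl

theorem ιMulti_mul_ι_of_finrank_eq (hn : Module.finrank K V = n) (v : V) (f : Fin n → V) :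
    ιMulti K n f * ι K v = 0 := by
  have : ι K v = ιMulti K 1 ![v] := by rw [ιMulti_succ_apply, ιMulti_zero_apply, mul_one]; rfl
  rw [this, ιMulti_mul_ιMulti, ιMulti_eq_zero_of_finrank_lt (by omega)]

theorem ιMulti_mem_center_of_finrank_eq (hn : Module.finrank K V = n) (f : Fin n → V) :
    ιMulti K n f ∈ Subring.center (ExteriorAlgebra K V) :=
  mem_center_of_forall_ι_mul_eq fun v => by
    rw [ι_mul_ιMulti_of_finrank_eq hn, ιMulti_mul_ι_of_finrank_eq hn]

theorem mul_ιMulti_of_finrank_eq (hn : Module.finrank K V = n) (x : ExteriorAlgebra K V)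
    (f : Fin n → V) :
    x * ιMulti K n f = algebraMapInv x • ιMulti K n f := by
  induction x using ExteriorAlgebra.induction with
  | algebraMap r => rw [algebraMap_leftInverse V r, Algebra.smul_def]
  | ι m => rw [ι_mul_ιMulti_of_finrank_eq hn, algebraMapInv, lift_ι_apply]; simp
  | mul x y hx hy => rw [map_mul, mul_assoc, hy, mul_smul_comm, hx, smul_smul, mul_comm]
  | add x y hx hy => rw [add_mul, hx, hy, map_add, add_smul]

theorem involute_mul_ιMulti_of_finrank_eq (hn : Module.finrank K V = n)
    (x : ExteriorAlgebra K V) (f : Fin n → V) :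
    involute (x * ιMulti K n f) = (-1) ^ n • (x * ιMulti K n f) := by
  rw [mul_ιMulti_of_finrank_eq hn, map_smul, involute_ιMulti, smul_comm]

end Field

end ExteriorAlgebra

/-- The center of the exterior algebra `R` of a 3-dimensional vector space (with basis
`e₀, e₁, e₂`) over a field of characteristic `0` or `p ≠ 2` is not subdirectly
indecomposable: `e₀ ∧ e₁` and `e₀ ∧ e₁ ∧ e₂` are central, and the ideals of the center
they generate are nonzero with zero intersection; consequently the infimum of all nonzero
ideals of the center is zero. -/
theorem exteriorAlgebra_dim_three_center_not_subdirectlyIndecomposable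
    (F : Type*) [Field F] (V : Type*) [AddCommGroup V] [Module F V]
    (hchar : ringChar F ≠ 2)
    (e : Module.Basis (Fin 3) F V) :
    ∃ (hu : ExteriorAlgebra.ι F (e 0) * ExteriorAlgebra.ι F (e 1) ∈
        Subring.center (ExteriorAlgebra F V))
      (hw : ExteriorAlgebra.ι F (e 0) * ExteriorAlgebra.ι F (e 1) *
          ExteriorAlgebra.ι F (e 2) ∈ Subring.center (ExteriorAlgebra F V)),
      Ideal.span {(⟨_, hu⟩ : Subring.center (ExteriorAlgebra F V))} ≠ ⊥ ∧
      Ideal.span {(⟨_, hw⟩ : Subring.center (ExteriorAlgebra F V))} ≠ ⊥ ∧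
      Ideal.span {(⟨_, hu⟩ : Subring.center (ExteriorAlgebra F V))} ⊓
        Ideal.span {(⟨_, hw⟩ : Subring.center (ExteriorAlgebra F V))} = ⊥ ∧
      sInf {I : Ideal (Subring.center (ExteriorAlgebra F V)) | I ≠ ⊥} = ⊥ := by
  have := Module.Finite.of_basis e
  have hdim : Module.finrank F V = 3 := by simp [Module.finrank_eq_card_basis e]
  have hw_eq : ι F (e 0) * ι F (e 1) * ι F (e 2) = ιMulti F 3 e := by
    rw [ιMulti_apply]
    simp [List.ofFn_succ, mul_assoc]
  have hw0 : ι F (e 0) * ι F (e 1) * ι F (e 2) ≠ 0 := hw_eq ▸ ιMulti_ne_zero_of_basis e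
  have hu := mem_center_of_involute_eq (involute_ι_mul_ι (R := F) (e 0) (e 1))
  have hw := hw_eq ▸ ιMulti_mem_center_of_finrank_eq hdim e
  have hU : Ideal.span {(⟨_, hu⟩ : Subring.center (ExteriorAlgebra F V))} ≠ ⊥ := by
    rw [Ne, Ideal.span_singleton_eq_bot, Subtype.ext_iff]
    exact left_ne_zero_of_mul hw0
  have hW : Ideal.span {(⟨_, hw⟩ : Subring.center (ExteriorAlgebra F V))} ≠ ⊥ := by
    rw [Ne, Ideal.span_singleton_eq_bot, Subtype.ext_iff]
    exact hw0
  have hI : Ideal.span {(⟨_, hu⟩ : Subring.center (ExteriorAlgebra F V))} ⊓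
      Ideal.span {(⟨_, hw⟩ : Subring.center (ExteriorAlgebra F V))} = ⊥ := by
    refine eq_bot_iff.mpr fun z hz => Subtype.ext ?_
    obtain ⟨⟨a, rfl⟩, ⟨b, hb⟩⟩ := And.imp Ideal.mem_span_singleton'.mp
      Ideal.mem_span_singleton'.mp (Ideal.mem_inf.mp hz)
    have hab : (a : ExteriorAlgebra F V) * (ι F (e 0) * ι F (e 1)) = b * ιMulti F 3 e := by
      rw [← hw_eq]; exact congrArg Subtype.val hb.symm
    change (a : ExteriorAlgebra F V) * (ι F (e 0) * ι F (e 1)) = 0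
    refine eq_zero_of_involute_eq_self_of_involute_eq_neg hchar
      (involute_mul_ι_mul_ι_of_mem_center a.2 _ _) ?_
    rw [hab, involute_mul_ιMulti_of_finrank_eq hdim, Odd.neg_one_pow (by decide), neg_one_smul]
  exact ⟨hu, hw, hU, hW, hI, le_antisymm ((le_inf (sInf_le hU) (sInf_le hW)).trans hI.le) bot_le⟩
end

section
/- Let Q₈ be the quaternion group of order 8, let R = 𝔽₂Q₈ be its group algebra over the field with two elements, let H be the ideal of R generated by the element Σ_{g∈Q₈} g, and let R̄ = R/H. Then the factor ring R̄ is not a centrally essential ring. -/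
namespace CEAux

open MonoidAlgebra QuaternionGroup

abbrev G := QuaternionGroup 2
abbrev R2 := MonoidAlgebra (ZMod 2) G

instance : CoeFun R2 (fun _ => G → ZMod 2) := ⟨fun x => x.coeff⟩

noncomputable def s : R2 := ∑ g : G, MonoidAlgebra.single g (1 : ZMod 2)

lemma s_apply (g : G) : s g = 1 := by
  rw [s, MonoidAlgebra.coeff_sum, Finsupp.finset_sum_apply]
  simp [MonoidAlgebra.single_apply]

lemma eq_sum_single (x : R2) : x = ∑ g : G, MonoidAlgebra.single g (x g) := by
  ext g
  rw [MonoidAlgebra.coeff_sum, Finsupp.finset_sum_apply]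
  simp [MonoidAlgebra.single_apply, Finsupp.single_apply]

lemma single_mul_s (h : G) (z : ZMod 2) : MonoidAlgebra.single h z * s = z • s := by
  ext g
  rw [MonoidAlgebra.coeff_smul_apply, MonoidAlgebra.single_mul_apply, s_apply, s_apply, mul_one,
    smul_eq_mul, mul_one]

lemma s_mul_single (h : G) (z : ZMod 2) : s * MonoidAlgebra.single h z = z • s := by
  ext g
  rw [MonoidAlgebra.coeff_smul_apply, MonoidAlgebra.mul_single_apply, s_apply, s_apply, one_mul,
    smul_eq_mul, mul_one]

lemma mul_s (x : R2) : x * s = (∑ g : G, x g) • s := by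
  conv_lhs => rw [eq_sum_single x]
  rw [Finset.sum_mul, Finset.sum_smul]
  exact Finset.sum_congr rfl fun g _ => single_mul_s g (x g)

lemma s_mul (x : R2) : s * x = (∑ g : G, x g) • s := by
  conv_lhs => rw [eq_sum_single x]
  rw [Finset.mul_sum, Finset.sum_smul]
  exact Finset.sum_congr rfl fun g _ => s_mul_single g (x g)

lemma zmod2_cases : ∀ z : ZMod 2, z = 0 ∨ z = 1 := by decide

lemma smul_s_mem (z : ZMod 2) : z • s = 0 ∨ z • s = s := by
  rcases zmod2_cases z with rfl | rfl
  · left; simp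
  · right; simp

lemma s_add_s : s + s = 0 := by
  ext g
  rw [MonoidAlgebra.coeff_add, Finsupp.add_apply, s_apply, MonoidAlgebra.coeff_zero, Finsupp.coe_zero, Pi.zero_apply]
  decide

lemma neg_s : -s = s := by
  ext g
  rw [MonoidAlgebra.coeff_neg, Finsupp.neg_apply, s_apply]
  decide

/-- The span of `{s}` is `{0, s}`. -/
lemma mem_span_iff_01 (x : R2) : x ∈ TwoSidedIdeal.span {s} ↔ x = 0 ∨ x = s := by
  constructor
  · intro hx
    have := TwoSidedIdeal.mem_span_iff.mp hx
      (TwoSidedIdeal.mk' {y : R2 | y = 0 ∨ y = s}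
        (Or.inl rfl)
        (by rintro x y (rfl | rfl) (rfl | rfl)
            · left; simp
            · right; simp
            · right; simp
            · left; exact s_add_s)
        (by rintro x (rfl | rfl)
            · left; simp
            · right; exact neg_s)
        (by rintro x y (rfl | rfl)
            · left; simp
            · rw [mul_s]; exact smul_s_mem _)
        (by rintro x y (rfl | rfl)
            · left; simp
            · rw [s_mul]; exact smul_s_mem _))
      (by rintro y rfl
          rw [SetLike.mem_coe, TwoSidedIdeal.mem_mk']
          exact Or.inr rfl)
    rwa [TwoSidedIdeal.mem_mk'] at this
  · rintro (rfl | rfl)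
    · exact TwoSidedIdeal.zero_mem _
    · exact TwoSidedIdeal.subset_span rfl

lemma mem_span_iff_coeff (x : R2) :
    x ∈ TwoSidedIdeal.span {s} ↔ (∀ g, x g = 0) ∨ (∀ g, x g = 1) := by
  rw [mem_span_iff_01]
  constructor
  · rintro (rfl | rfl)
    · exact Or.inl fun g => rfl
    · exact Or.inr s_apply
  · rintro (h | h)
    · exact Or.inl (MonoidAlgebra.ext (Finsupp.ext h))
    · exact Or.inr (MonoidAlgebra.ext (Finsupp.ext fun g => by rw [h, s_apply]))

/-- generators of `Q₈` -/
def A : G := QuaternionGroup.a 1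
def B : G := QuaternionGroup.xa 0

/-- the coefficient function of `w * c` where `w = a² + a³ + a²b + a³b` and `c` has
coefficient function `z`. -/
def dz (z : G → ZMod 2) (g : G) : ZMod 2 :=
  z ((QuaternionGroup.a 2)⁻¹ * g) + z ((QuaternionGroup.a 3)⁻¹ * g) +
    z ((QuaternionGroup.xa 2)⁻¹ * g) + z ((QuaternionGroup.xa 3)⁻¹ * g)

set_option maxRecDepth 20000 in
/-- The key finite verification. -/
lemma key : ∀ z : G → ZMod 2,
    ((∀ g, z (A⁻¹ * g) - z (g * A⁻¹) = 0) ∨ (∀ g, z (A⁻¹ * g) - z (g * A⁻¹) = 1)) →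
    ((∀ g, z (B⁻¹ * g) - z (g * B⁻¹) = 0) ∨ (∀ g, z (B⁻¹ * g) - z (g * B⁻¹) = 1)) →
    (¬ ((∀ g, dz z g = 0) ∨ (∀ g, dz z g = 1))) →
    ((∀ g, dz z (A⁻¹ * g) - dz z (g * A⁻¹) = 0) ∨
      (∀ g, dz z (A⁻¹ * g) - dz z (g * A⁻¹) = 1)) →
    ((∀ g, dz z (B⁻¹ * g) - dz z (g * B⁻¹) = 0) ∨
      (∀ g, dz z (B⁻¹ * g) - dz z (g * B⁻¹) = 1)) → False := by
  decide

/-- the witness element `w = a² + a³ + a²b + a³b`. -/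
lemma mag_add_apply (x y : R2) (g : G) : (x + y) g = x g + y g := Finsupp.add_apply _ _ _

lemma mag_sub_apply (x y : R2) (g : G) : (x - y) g = x g - y g := Finsupp.sub_apply _ _ _

noncomputable def W : R2 :=
  MonoidAlgebra.single (QuaternionGroup.a 2) 1 + MonoidAlgebra.single (QuaternionGroup.a 3) 1 +
    MonoidAlgebra.single (QuaternionGroup.xa 2) 1 +
    MonoidAlgebra.single (QuaternionGroup.xa 3) 1

lemma W_a2 : W (QuaternionGroup.a 2) = 1 := by
  rw [W, mag_add_apply, mag_add_apply, mag_add_apply, MonoidAlgebra.single_apply,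
    MonoidAlgebra.single_apply, MonoidAlgebra.single_apply, MonoidAlgebra.single_apply,
    if_pos rfl, if_neg (by decide), if_neg (by decide), if_neg (by decide)]
  decide

lemma W_a0 : W (QuaternionGroup.a 0) = 0 := by
  rw [W, mag_add_apply, mag_add_apply, mag_add_apply, MonoidAlgebra.single_apply,
    MonoidAlgebra.single_apply, MonoidAlgebra.single_apply, MonoidAlgebra.single_apply,
    if_neg (by decide), if_neg (by decide), if_neg (by decide), if_neg (by decide)]
  decide

lemma W_mul_apply (c : R2) (g : G) : (W * c) g = dz (⇑c) g := by
  simp only [W, add_mul, mag_add_apply, MonoidAlgebra.single_mul_apply, one_mul, dz]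

end CEAux

open CEAux in
/-- Let `R = 𝔽₂Q₈` be the group algebra of the quaternion group of order `8`
(`QuaternionGroup 2`) over the field with two elements, and let `H` be the two-sided
ideal of `R` generated by `Σ_{g ∈ Q₈} g`. Then the factor ring `R/H` is not centrally
essential. -/
theorem quaternionGroupAlgebra_quotient_core_not_centrallyEssential :
    ¬ IsCentrallyEssential
      (TwoSidedIdeal.span
        {(∑ g : QuaternionGroup 2,
          MonoidAlgebra.single g (1 : ZMod 2) :
            MonoidAlgebra (ZMod 2) (QuaternionGroup 2))}).ringCon.Quotient := by
  show ¬ IsCentrallyEssential (TwoSidedIdeal.span {s}).ringCon.Quotient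
  intro h
  set I := TwoSidedIdeal.span {s} with hI
  -- the witness is not zero in the quotient
  have hW : (W : I.ringCon.Quotient) ≠ 0 := by
    rw [← RingCon.coe_zero, Ne, RingCon.eq, TwoSidedIdeal.rel_iff, sub_zero, mem_span_iff_coeff]
    rintro (h0 | h1)
    · have := h0 (QuaternionGroup.a 2)
      rw [W_a2] at this
      exact absurd this (by decide)
    · have := h1 (QuaternionGroup.a 0)
      rw [W_a0] at this
      exact absurd this (by decide)
  obtain ⟨cq, hc, hne, hcc⟩ := h (W : I.ringCon.Quotient) hW
  obtain ⟨c, rfl⟩ := Quotient.exists_rep cq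
  have hcoe : ∀ x : R2, (⟦x⟧ : I.ringCon.Quotient) = (x : I.ringCon.Quotient) := fun _ => rfl
  rw [hcoe] at hc hne hcc
  -- commutator of an element of the quotient with a group element, in coefficient form
  have comm_mem : ∀ (x : R2) (g0 : G),
      (MonoidAlgebra.single g0 (1 : ZMod 2) : R2) * x - x * MonoidAlgebra.single g0 1 ∈ I →
      ((∀ g, x (g0⁻¹ * g) - x (g * g0⁻¹) = 0) ∨ (∀ g, x (g0⁻¹ * g) - x (g * g0⁻¹) = 1)) := by
    intro x g0 hmem
    rw [mem_span_iff_coeff] at hmem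
    simpa only [mag_sub_apply, MonoidAlgebra.single_mul_apply,
      MonoidAlgebra.mul_single_apply, one_mul, mul_one] using hmem
  have center_comm : ∀ (x : R2), (x : I.ringCon.Quotient) ∈ Set.center I.ringCon.Quotient →
      ∀ g0 : G, (MonoidAlgebra.single g0 (1 : ZMod 2) : R2) * x -
        x * MonoidAlgebra.single g0 1 ∈ I := by
    intro x hx g0
    have := (hx.comm ((MonoidAlgebra.single g0 (1 : ZMod 2) : R2) : I.ringCon.Quotient)).eq
    -- this : ↑x * ↑(single g0 1) = ↑(single g0 1) * ↑x
    rw [← RingCon.coe_mul, ← RingCon.coe_mul, RingCon.eq] at this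
    exact (TwoSidedIdeal.rel_iff _ _ _).mp this.symm
  -- hypotheses of the key lemma
  have h1 := comm_mem c A (center_comm c hc A)
  have h2 := comm_mem c B (center_comm c hc B)
  rw [← RingCon.coe_mul] at hne hcc
  have h3 : ¬ ((∀ g, dz (⇑c) g = 0) ∨ (∀ g, dz (⇑c) g = 1)) := by
    intro h3'
    apply hne
    rw [← RingCon.coe_zero, RingCon.eq, TwoSidedIdeal.rel_iff, sub_zero, mem_span_iff_coeff]
    rcases h3' with h3' | h3'
    · exact Or.inl fun g => by rw [W_mul_apply]; exact h3' g
    · exact Or.inr fun g => by rw [W_mul_apply]; exact h3' g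
  have h4 := comm_mem (W * c) A (center_comm (W * c) hcc A)
  have h5 := comm_mem (W * c) B (center_comm (W * c) hcc B)
  simp only [W_mul_apply] at h4 h5
  exact key (⇑c) h1 h2 h3 h4 h5
end
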